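/- arXiv:math/0604073 — 3 statements merged into one kernel-verified Lean document; each statement's English description precedes it below -/
import Mathlib

section
/- Let φ : ℂ^{m+1}\{0} → ℝ be smooth, scaling-invariant, G-invariant and g-admissible. Then for all real numbers x_1,…,x_m > 0, (φ−ψ)(1,x_1,…,x_m) ≥ (φ−ψ)(1,x_1,…,x_k,ζ,…,ζ), where ζ = (x_{k+1}⋯x_m)^{1/(m−k)} occupies the last m−k coordinates. -/
open Complex MeasureTheory Finset

noncomputable section

/-- Squared norm of a complex vector. -/
def nsq {n : ℕ} (z : Fin n → ℂ) : ℝ := ∑ i, ‖z i‖ ^ 2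

/-- Laplacian at a point of a real-valued function of one complex variable. -/
def lap (f : ℂ → ℝ) (t : ℂ) : ℝ :=
  lineDeriv ℝ (fun s => lineDeriv ℝ f s 1) t 1 +
  lineDeriv ℝ (fun s => lineDeriv ℝ f s Complex.I) t Complex.I

def psi1 (m k : ℕ) (z : Fin (m + 1) → ℂ) : ℝ :=
  Real.log ((∏ i ∈ Finset.univ.filter (fun i : Fin (m + 1) => (i : ℕ) ≤ k),
      ‖z i‖) ^ (2 * ((m : ℝ) + 1) / ((k : ℝ) + 1)) /
    nsq z ^ ((m : ℝ) + 1))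

def psi2 (m k : ℕ) (z : Fin (m + 1) → ℂ) : ℝ :=
  Real.log ((∏ i ∈ Finset.univ.filter (fun i : Fin (m + 1) => k + 1 ≤ (i : ℕ)),
      ‖z i‖) ^ (2 * ((m : ℝ) + 1) / ((m : ℝ) - (k : ℝ))) /
    nsq z ^ ((m : ℝ) + 1))

def psi (m k : ℕ) (z : Fin (m + 1) → ℂ) : ℝ := min (psi1 m k z) (psi2 m k z)

/-- Scaling invariance: φ descends to projective space. -/
def ScalInv (m : ℕ) (φ : (Fin (m + 1) → ℂ) → ℝ) : Prop :=
  ∀ lam : ℂ, lam ≠ 0 → ∀ z : Fin (m + 1) → ℂ, φ (lam • z) = φ z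

/-- Invariance under the group G. -/
def GInv (m k : ℕ) (φ : (Fin (m + 1) → ℂ) → ℝ) : Prop :=
  (∀ i j : Fin (m + 1), (i : ℕ) ≤ k → (j : ℕ) ≤ k →
      ∀ z : Fin (m + 1) → ℂ, φ (z ∘ Equiv.swap i j) = φ z) ∧
  (∀ p q : Fin (m + 1), k + 1 ≤ (p : ℕ) → k + 1 ≤ (q : ℕ) →
      ∀ z : Fin (m + 1) → ℂ, φ (z ∘ Equiv.swap p q) = φ z) ∧
  (∀ l : Fin (m + 1), ∀ θ : ℝ, ∀ z : Fin (m + 1) → ℂ,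
      φ (Function.update z l (Complex.exp ((θ : ℂ) * Complex.I) * z l)) = φ z)

/-- g-admissibility: positivity of g + i∂∂̄φ expressed along complex lines. -/
def Adm (m : ℕ) (φ : (Fin (m + 1) → ℂ) → ℝ) : Prop :=
  ∀ z : Fin (m + 1) → ℂ, z ≠ 0 → ∀ w : Fin (m + 1) → ℂ, (∀ c : ℂ, w ≠ c • z) →
    0 < lap (fun t : ℂ => ((m : ℝ) + 1) * Real.log (nsq (z + t • w)) + φ (z + t • w)) 0

/-! ### Auxiliary material -/

namespace Stmt6Aux

lemma nsq_pos {N : ℕ} {z : Fin N → ℂ} (i : Fin N) (h : z i ≠ 0) : 0 < nsq z := by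
  unfold nsq
  apply Finset.sum_pos' (fun j _ => sq_nonneg _)
  exact ⟨i, Finset.mem_univ i, pow_pos (norm_pos_iff.mpr h) 2⟩

lemma contDiff_nsq {N : ℕ} : ContDiff ℝ 2 (nsq : (Fin N → ℂ) → ℝ) := by
  have hrw : (nsq : (Fin N → ℂ) → ℝ) =
      fun z => ∑ i, ((z i).re * (z i).re + (z i).im * (z i).im) := by
    funext z
    exact Finset.sum_congr rfl fun i _ => by
      rw [Complex.sq_norm, Complex.normSq_apply]
  rw [hrw]
  apply ContDiff.sum
  intro i _
  have hproj : ContDiff ℝ 2 (fun z : Fin N → ℂ => z i) :=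
    (ContinuousLinearMap.proj (R := ℝ) (φ := fun _ : Fin N => ℂ) i).contDiff
  have hre : ContDiff ℝ 2 (fun z : Fin N → ℂ => (z i).re) :=
    Complex.reCLM.contDiff.comp hproj
  have him : ContDiff ℝ 2 (fun z : Fin N → ℂ => (z i).im) :=
    Complex.imCLM.contDiff.comp hproj
  exact (hre.mul hre).add (him.mul him)

lemma exists_ne_zero {N : ℕ} {z : Fin N → ℂ} (hz : z ≠ 0) : ∃ i, z i ≠ 0 := by
  by_contra h
  push_neg at h
  exact hz (funext fun i => h i)

lemma contDiffAt_Phi (m : ℕ) (φ : (Fin (m + 1) → ℂ) → ℝ)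
    (hsm : ContDiffOn ℝ (⊤ : ℕ∞) φ {z : Fin (m + 1) → ℂ | z ≠ 0})
    {z : Fin (m + 1) → ℂ} (hz : z ≠ 0) :
    ContDiffAt ℝ 2 (fun z : Fin (m + 1) → ℂ =>
      ((m : ℝ) + 1) * Real.log (nsq z) + φ z) z := by
  have hopen : IsOpen {z : Fin (m + 1) → ℂ | z ≠ 0} := isOpen_ne
  have hmem : {z : Fin (m + 1) → ℂ | z ≠ 0} ∈ nhds z := hopen.mem_nhds hz
  have h1 : ContDiffAt ℝ 2 φ z := (hsm.contDiffAt hmem).of_le (WithTop.coe_le_coe.mpr le_top)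
  obtain ⟨i, hi⟩ := exists_ne_zero hz
  have hnsq : nsq z ≠ 0 := (nsq_pos i hi).ne'
  have h2 : ContDiffAt ℝ 2 (fun z : Fin (m + 1) → ℂ => Real.log (nsq z)) z :=
    (Real.contDiffAt_log.mpr hnsq).comp z contDiff_nsq.contDiffAt
  exact (contDiffAt_const.mul h2).add h1

lemma phase_inv {m k : ℕ} {φ : (Fin (m + 1) → ℂ) → ℝ} (hG : GInv m k φ)
    (θ : Fin (m + 1) → ℝ) (v : Fin (m + 1) → ℂ) :
    φ (fun i => Complex.exp ((θ i : ℂ) * Complex.I) * v i) = φ v := by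
  classical
  have key : ∀ s : Finset (Fin (m + 1)),
      φ (fun i => if i ∈ s then Complex.exp ((θ i : ℂ) * Complex.I) * v i else v i) = φ v := by
    intro s
    induction s using Finset.induction_on with
    | empty => simp
    | @insert j s hj ih =>
      have hfe : (fun i => if i ∈ insert j s then Complex.exp ((θ i : ℂ) * Complex.I) * v i
            else v i) =
          Function.update (fun i => if i ∈ s then Complex.exp ((θ i : ℂ) * Complex.I) * v i
            else v i) j
            (Complex.exp ((θ j : ℂ) * Complex.I) *
              (fun i => if i ∈ s then Complex.exp ((θ i : ℂ) * Complex.I) * v i else v i) j) := by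
        funext i
        by_cases hij : i = j
        · subst hij
          simp [Function.update_self, hj]
        · rw [Function.update_of_ne hij]
          simp [Finset.mem_insert, hij]
      rw [hfe, hG.2.2 j (θ j) _, ih]
  have := key Finset.univ
  simpa using this

lemma nsq_phase {N : ℕ} (θ : Fin N → ℝ) (v : Fin N → ℂ) :
    nsq (fun i => Complex.exp ((θ i : ℂ) * Complex.I) * v i) = nsq v := by
  unfold nsq
  apply Finset.sum_congr rfl
  intro i _
  rw [norm_mul, Complex.norm_exp]
  simp

lemma nsq_comp_equiv {N : ℕ} (v : Fin N → ℂ) (e : Equiv.Perm (Fin N)) :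
    nsq (v ∘ e) = nsq v := by
  unfold nsq
  exact _root_.Equiv.sum_comp e (fun i => ‖v i‖ ^ 2)

/-- second directional line derivative through `HasFDerivAt` data -/
lemma lineDeriv2_eq {f : ℂ → ℝ} {x e : ℂ} {P : ℂ → (ℂ →L[ℝ] ℝ)} {P' : ℂ →L[ℝ] (ℂ →L[ℝ] ℝ)}
    (hP : ∀ᶠ s in nhds x, HasFDerivAt f (P s) s) (hP' : HasFDerivAt P P' x) :
    lineDeriv ℝ (fun s => lineDeriv ℝ f s e) x e = P' e e := by
  have hc : Continuous (fun τ : ℝ => x + τ • e) := by fun_prop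
  have htd : Filter.Tendsto (fun τ : ℝ => x + τ • e) (nhds 0) (nhds x) :=
    hc.tendsto' 0 x (by simp)
  have hline : (fun τ : ℝ => lineDeriv ℝ f (x + τ • e) e)
      =ᶠ[nhds (0 : ℝ)] (fun τ : ℝ => P (x + τ • e) e) := by
    refine (htd.eventually hP).mono fun τ h => ?_
    show lineDeriv ℝ f (x + τ • e) e = P (x + τ • e) e
    rw [h.differentiableAt.lineDeriv_eq_fderiv, h.fderiv]
  show deriv (fun τ : ℝ => lineDeriv ℝ f (x + τ • e) e) 0 = P' e e
  rw [hline.deriv_eq]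
  have h1 : HasFDerivAt (fun s : ℂ => P s e)
      ((ContinuousLinearMap.apply ℝ ℝ e).comp P') x :=
    (ContinuousLinearMap.apply ℝ ℝ e).hasFDerivAt.comp x hP'
  have h2 : HasDerivAt (fun τ : ℝ => x + τ • e) e 0 := by
    simpa using ((hasDerivAt_id (0 : ℝ)).smul_const e).const_add x
  have h3 := h1.comp_hasDerivAt_of_eq 0 h2 (by simp)
  have hfe : (fun τ : ℝ => P (x + τ • e) e)
      = ((fun s : ℂ => P s e) ∘ fun τ : ℝ => x + τ • e) := rfl
  rw [hfe, h3.deriv]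
  rfl

lemma lap_eq_of {f : ℂ → ℝ} {x : ℂ} {P : ℂ → (ℂ →L[ℝ] ℝ)} {P' : ℂ →L[ℝ] (ℂ →L[ℝ] ℝ)}
    (hP : ∀ᶠ s in nhds x, HasFDerivAt f (P s) s) (hP' : HasFDerivAt P P' x) :
    lap f x = P' 1 1 + P' Complex.I Complex.I := by
  unfold lap
  rw [lineDeriv2_eq hP hP', lineDeriv2_eq hP hP']

/-- `v ↦ (e ↦ e • v)` as a continuous linear map. -/
def SRL (N : ℕ) : (Fin N → ℂ) →L[ℝ] (ℂ →L[ℝ] (Fin N → ℂ)) :=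
  LinearMap.mkContinuous
    (ContinuousLinearMap.smulRightₗ (ContinuousLinearMap.id ℝ ℂ) :
      (Fin N → ℂ) →ₗ[ℝ] (ℂ →L[ℝ] (Fin N → ℂ)))
    1
    (fun v => by
      apply ContinuousLinearMap.opNorm_le_bound _ (by positivity)
      intro e
      simp only [ContinuousLinearMap.coe_smulRightₗ, ContinuousLinearMap.smulRight_apply,
        ContinuousLinearMap.coe_id', id_eq]
      rw [norm_smul]
      ring_nf
      exact le_rfl)

@[simp] lemma SRL_apply {N : ℕ} (v : Fin N → ℂ) :
    SRL N v = (ContinuousLinearMap.id ℝ ℂ).smulRight v := rfl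

end Stmt6Aux

open Stmt6Aux in
/-- Key convexity lemma: `Φ` along multiplicative torus lines is convex. -/
lemma conv_line (m k : ℕ) (φ : (Fin (m + 1) → ℂ) → ℝ)
    (hsm : ContDiffOn ℝ (⊤ : ℕ∞) φ {z : Fin (m + 1) → ℂ | z ≠ 0})
    (hG : GInv m k φ) (hadm : Adm m φ)
    (u a : Fin (m + 1) → ℝ) (hnc : ∃ i j, a i ≠ a j) :
    ConvexOn ℝ Set.univ (fun s : ℝ =>
      ((m : ℝ) + 1) * Real.log (nsq (fun i => Complex.exp (((u i + s * a i : ℝ) : ℂ))))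
        + φ (fun i => Complex.exp (((u i + s * a i : ℝ) : ℂ)))) := by
  classical
  set Φ : (Fin (m + 1) → ℂ) → ℝ :=
    fun z => ((m : ℝ) + 1) * Real.log (nsq z) + φ z with hΦdef
  set H : ℂ → (Fin (m + 1) → ℂ) :=
    fun t i => Complex.exp ((u i : ℂ) + (a i : ℂ) * t) with hHdef
  have hHne : ∀ (t : ℂ) (i : Fin (m + 1)), H t i ≠ 0 := fun t i => by
    simp only [hHdef]; exact Complex.exp_ne_zero _
  have hH0 : ∀ t, H t ≠ 0 := fun t h0 => hHne t 0 (by simpa using congrFun h0 0)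
  set w : ℂ → (Fin (m + 1) → ℂ) := fun t i => (a i : ℂ) * H t i with hwdef
  set w2 : ℂ → (Fin (m + 1) → ℂ) := fun t i => (a i : ℂ) * ((a i : ℂ) * H t i) with hw2def
  set DH : ℂ → (ℂ →L[ℝ] (Fin (m + 1) → ℂ)) :=
    fun t => (ContinuousLinearMap.id ℝ ℂ).smulRight (w t) with hDHdef
  have hcoord : ∀ (i : Fin (m + 1)) (t : ℂ),
      HasDerivAt (fun t => Complex.exp ((u i : ℂ) + (a i : ℂ) * t))
        (Complex.exp ((u i : ℂ) + (a i : ℂ) * t) * (a i : ℂ)) t := by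
    intro i t
    have hli : HasDerivAt (fun t : ℂ => (u i : ℂ) + (a i : ℂ) * t) ((a i : ℂ)) t := by
      simpa using ((hasDerivAt_id t).const_mul ((a i : ℂ))).const_add ((u i : ℂ))
    exact (Complex.hasDerivAt_exp _).comp t hli
  have hDH : ∀ t, HasFDerivAt H (DH t) t := by
    intro t
    apply hasFDerivAt_pi''
    intro i
    have h1 := ((hcoord i t).hasFDerivAt).restrictScalars ℝ
    have heq : (ContinuousLinearMap.proj (R := ℝ) (φ := fun _ : Fin (m + 1) => ℂ) i).comp (DH t)
        = ((ContinuousLinearMap.smulRight (1 : ℂ →L[ℂ] ℂ)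
            (Complex.exp ((u i : ℂ) + (a i : ℂ) * t) * (a i : ℂ))).restrictScalars ℝ) := by
      ext e
      simp only [ContinuousLinearMap.coe_comp', Function.comp_apply,
        ContinuousLinearMap.proj_apply, hDHdef, ContinuousLinearMap.smulRight_apply,
        ContinuousLinearMap.coe_id', id_eq, Pi.smul_apply, smul_eq_mul,
        ContinuousLinearMap.coe_restrictScalars', ContinuousLinearMap.one_apply, hwdef, hHdef]
      ring
    rw [heq]
    exact h1
  have hw : ∀ t, HasFDerivAt w ((ContinuousLinearMap.id ℝ ℂ).smulRight (w2 t)) t := by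
    intro t
    apply hasFDerivAt_pi''
    intro i
    have h1 := (((hcoord i t).const_mul ((a i : ℂ))).hasFDerivAt).restrictScalars ℝ
    have heq : (ContinuousLinearMap.proj (R := ℝ) (φ := fun _ : Fin (m + 1) => ℂ) i).comp
        ((ContinuousLinearMap.id ℝ ℂ).smulRight (w2 t))
        = ((ContinuousLinearMap.smulRight (1 : ℂ →L[ℂ] ℂ)
            ((a i : ℂ) * (Complex.exp ((u i : ℂ) + (a i : ℂ) * t) * (a i : ℂ)))).restrictScalars ℝ) := by
      ext e
      simp only [ContinuousLinearMap.coe_comp', Function.comp_apply,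
        ContinuousLinearMap.proj_apply, ContinuousLinearMap.smulRight_apply,
        ContinuousLinearMap.coe_id', id_eq, Pi.smul_apply, smul_eq_mul,
        ContinuousLinearMap.coe_restrictScalars', ContinuousLinearMap.one_apply, hw2def, hHdef]
      ring
    rw [heq]
    exact h1
  have hDHd : ∀ t : ℂ, HasFDerivAt DH
      ((SRL (m + 1)).comp ((ContinuousLinearMap.id ℝ ℂ).smulRight (w2 t))) t := by
    intro t
    exact (SRL (m + 1)).hasFDerivAt.comp t (hw t)
  have hHsm : ContDiff ℝ 2 H := by
    rw [hHdef]
    apply contDiff_pi.mpr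
    intro i
    apply (Complex.contDiff_exp (𝕜 := ℝ)).comp
    exact contDiff_const.add (contDiff_const.mul contDiff_id)
  set q : ℝ → ℝ := fun s => Φ (H (s : ℂ)) with hqdef
  have htarget : (fun s : ℝ =>
      ((m : ℝ) + 1) * Real.log (nsq (fun i => Complex.exp (((u i + s * a i : ℝ) : ℂ))))
        + φ (fun i => Complex.exp (((u i + s * a i : ℝ) : ℂ)))) = q := by
    funext s
    have harg : (fun i => Complex.exp (((u i + s * a i : ℝ) : ℂ))) = H (s : ℂ) := by
      funext i
      simp only [hHdef]
      congr 1
      push_cast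
      ring
    rw [harg, hqdef, hΦdef]
  have hq_eq : ∀ t : ℂ, Φ (H t) = q t.re := by
    intro t
    have hsplit : H t =
        fun i => Complex.exp (((a i * t.im : ℝ) : ℂ) * Complex.I) * H (t.re : ℂ) i := by
      funext i
      simp only [hHdef]
      rw [← Complex.exp_add]
      congr 1
      push_cast
      linear_combination (-(a i : ℂ)) * (Complex.re_add_im t)
    rw [hsplit]
    simp only [hΦdef, hqdef]
    rw [nsq_phase, phase_inv hG]
  have hkey : ∀ s₀ : ℝ, 0 < lap (fun t => Φ (H t)) (s₀ : ℂ) := by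
    intro s₀
    have hz₀ : H (s₀ : ℂ) ≠ 0 := hH0 _
    have hΦ2 : ContDiffAt ℝ 2 Φ (H (s₀ : ℂ)) := contDiffAt_Phi m φ hsm hz₀
    have hΦ1 : ContDiffAt ℝ 1 (fderiv ℝ Φ) (H (s₀ : ℂ)) :=
      hΦ2.fderiv_right (by norm_num)
    set S := fderiv ℝ (fderiv ℝ Φ) (H (s₀ : ℂ)) with hSdef
    have hS : HasFDerivAt (fderiv ℝ Φ) S (H (s₀ : ℂ)) :=
      (hΦ1.differentiableAt one_ne_zero).hasFDerivAt
    have hΦd : ∀ z : Fin (m + 1) → ℂ, z ≠ 0 → DifferentiableAt ℝ Φ z := fun z hz =>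
      (contDiffAt_Phi m φ hsm hz).differentiableAt two_ne_zero
    have hPh : ∀ t : ℂ, HasFDerivAt (fun t => Φ (H t)) ((fderiv ℝ Φ (H t)).comp (DH t)) t :=
      fun t => ((hΦd (H t) (hH0 t)).hasFDerivAt).comp t (hDH t)
    have hc : HasFDerivAt (fun t : ℂ => fderiv ℝ Φ (H t)) (S.comp (DH (s₀ : ℂ))) (s₀ : ℂ) :=
      hS.comp _ (hDH _)
    have hPh' := hc.clm_comp (hDHd (s₀ : ℂ))
    have hlap_h := lap_eq_of (Filter.Eventually.of_forall hPh) hPh'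
    -- the admissibility side
    have hwne : ∀ c : ℂ, w (s₀ : ℂ) ≠ c • H (s₀ : ℂ) := by
      intro c hcc
      obtain ⟨i, j, hij⟩ := hnc
      have hgen : ∀ l : Fin (m + 1), (a l : ℂ) = c := by
        intro l
        have hl := congrFun hcc l
        simp only [hwdef, Pi.smul_apply, smul_eq_mul] at hl
        exact mul_right_cancel₀ (hHne _ l) hl
      have : (a i : ℂ) = (a j : ℂ) := by rw [hgen i, hgen j]
      exact hij (by exact_mod_cast this)
    have hadm0 := hadm (H (s₀ : ℂ)) hz₀ (w (s₀ : ℂ)) hwne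
    set Dw := (ContinuousLinearMap.id ℝ ℂ).smulRight (w (s₀ : ℂ)) with hDwdef
    have hA : ∀ t : ℂ, HasFDerivAt (fun t : ℂ => H (s₀ : ℂ) + t • w (s₀ : ℂ)) Dw t := by
      intro t
      exact (Dw.hasFDerivAt (x := t)).const_add (H (s₀ : ℂ))
    have hev : ∀ᶠ t : ℂ in nhds 0, (H (s₀ : ℂ) + t • w (s₀ : ℂ)) ≠ 0 := by
      have hcont : Continuous (fun t : ℂ => H (s₀ : ℂ) + t • w (s₀ : ℂ)) := by fun_prop
      have h0 : H (s₀ : ℂ) + (0 : ℂ) • w (s₀ : ℂ) ≠ 0 := by simpa using hz₀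
      exact (hcont.continuousAt (x := 0)).eventually_ne h0
    have hPg : ∀ᶠ t : ℂ in nhds 0, HasFDerivAt (fun t : ℂ => Φ (H (s₀ : ℂ) + t • w (s₀ : ℂ)))
        ((fderiv ℝ Φ (H (s₀ : ℂ) + t • w (s₀ : ℂ))).comp Dw) t :=
      hev.mono fun t ht => by
        have h1 := (hΦd _ ht).hasFDerivAt
        exact h1.comp t (hA t)
    have hS' : HasFDerivAt (fderiv ℝ Φ) S (H (s₀ : ℂ) + (0 : ℂ) • w (s₀ : ℂ)) := by
      rw [zero_smul, add_zero]; exact hS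
    have hcg : HasFDerivAt (fun t : ℂ => fderiv ℝ Φ (H (s₀ : ℂ) + t • w (s₀ : ℂ)))
        (S.comp Dw) 0 := hS'.comp 0 (hA 0)
    have hdg : HasFDerivAt (fun _ : ℂ => Dw)
        (0 : ℂ →L[ℝ] (ℂ →L[ℝ] (Fin (m + 1) → ℂ))) 0 := hasFDerivAt_const Dw 0
    have hPg' := hcg.clm_comp hdg
    have hlap_g := lap_eq_of hPg hPg'
    have hgfun : (fun t : ℂ => ((m : ℝ) + 1) * Real.log (nsq (H (s₀ : ℂ) + t • w (s₀ : ℂ)))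
        + φ (H (s₀ : ℂ) + t • w (s₀ : ℂ)))
        = fun t : ℂ => Φ (H (s₀ : ℂ) + t • w (s₀ : ℂ)) := by
      funext t; simp only [hΦdef]
    rw [hgfun, hlap_g] at hadm0
    rw [hlap_h]
    convert hadm0 using 1
    simp only [ContinuousLinearMap.add_apply, ContinuousLinearMap.coe_comp',
      Function.comp_apply, ContinuousLinearMap.compL_apply, ContinuousLinearMap.flip_apply,
      SRL_apply, ContinuousLinearMap.smulRight_apply, ContinuousLinearMap.coe_id', id_eq,
      ContinuousLinearMap.zero_apply, one_smul, ContinuousLinearMap.comp_zero,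
      ContinuousLinearMap.zero_comp, ContinuousLinearMap.comp_apply, map_zero, add_zero,
      ContinuousLinearMap.map_zero]
    have hII : (Complex.I) • (Complex.I) • (w2 (s₀ : ℂ)) = -(w2 (s₀ : ℂ)) := by
      rw [smul_smul, Complex.I_mul_I, neg_one_smul]
    rw [hII, map_neg]
    ring
  have hq2 : ContDiff ℝ 2 q := by
    have hh2 : ContDiff ℝ 2 (fun t : ℂ => Φ (H t)) := contDiff_iff_contDiffAt.mpr fun t =>
      (contDiffAt_Phi m φ hsm (hH0 t)).comp t hHsm.contDiffAt
    exact hh2.comp Complex.ofRealCLM.contDiff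
  have hdq : Differentiable ℝ q := hq2.differentiable two_ne_zero
  have hdq2 : Differentiable ℝ (deriv q) := by
    have h21 : (2 : WithTop ℕ∞) = 1 + 1 := by norm_num
    rw [h21] at hq2
    exact ((contDiff_succ_iff_deriv.mp hq2).2.2).differentiable one_ne_zero
  have hlapq : ∀ s₀ : ℝ, lap (fun t => Φ (H t)) (s₀ : ℂ) = deriv (deriv q) s₀ := by
    intro s₀
    have e1 : (fun s : ℂ => lineDeriv ℝ (fun t => Φ (H t)) s 1)
        = fun s : ℂ => deriv q s.re := by
      funext s
      show deriv (fun τ : ℝ => Φ (H (s + τ • (1 : ℂ)))) 0 = deriv q s.re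
      have hfe : (fun τ : ℝ => Φ (H (s + τ • (1 : ℂ)))) = fun τ : ℝ => q (s.re + τ) := by
        funext τ
        rw [hq_eq]
        congr 1
        simp [Complex.real_smul]
      rw [hfe, deriv_comp_const_add, add_zero]
    have e2 : (fun s : ℂ => lineDeriv ℝ (fun t => Φ (H t)) s Complex.I)
        = fun _ : ℂ => (0 : ℝ) := by
      funext s
      show deriv (fun τ : ℝ => Φ (H (s + τ • Complex.I))) 0 = 0
      have hfe : (fun τ : ℝ => Φ (H (s + τ • Complex.I))) = fun _ : ℝ => q s.re := by
        funext τ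
        rw [hq_eq]
        congr 1
        simp [Complex.real_smul]
      rw [hfe, deriv_const]
    unfold lap
    rw [e1, e2]
    have e3 : lineDeriv ℝ (fun s : ℂ => deriv q s.re) (s₀ : ℂ) 1 = deriv (deriv q) s₀ := by
      show deriv (fun τ : ℝ => deriv q (((s₀ : ℂ) + τ • (1 : ℂ)).re)) 0 = _
      have hfe : (fun τ : ℝ => deriv q (((s₀ : ℂ) + τ • (1 : ℂ)).re))
          = fun τ : ℝ => deriv q (s₀ + τ) := by
        funext τ; congr 1; simp [Complex.real_smul]
      rw [hfe, deriv_comp_const_add, add_zero]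
    have e4 : lineDeriv ℝ (fun _ : ℂ => (0 : ℝ)) (s₀ : ℂ) Complex.I = 0 := by
      show deriv (fun _ : ℝ => (0 : ℝ)) 0 = 0
      exact deriv_const _ _
    rw [e3, e4, add_zero]
  rw [htarget]
  apply convexOn_univ_of_deriv2_nonneg hdq hdq2
  intro s
  have h2 : deriv^[2] q s = deriv (deriv q) s := by
    rw [show (2 : ℕ) = 1 + 1 from rfl, Function.iterate_succ_apply', Function.iterate_one]
  rw [h2, ← hlapq s]
  exact (hkey s).le


open Stmt6Aux in
/-- Robin Hood averaging lemma -/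
lemma robin {N : ℕ} (T : Finset (Fin N)) (F : (Fin N → ℝ) → ℝ)
    (hsym : ∀ i ∈ T, ∀ j ∈ T, ∀ y : Fin N → ℝ, F (y ∘ Equiv.swap i j) = F y)
    (hconv : ∀ y y' : Fin N → ℝ, (∀ i, i ∉ T → y' i = y i) →
      ConvexOn ℝ Set.univ (fun s : ℝ => F (y + s • (y' - y))))
    (y : Fin N → ℝ) :
    F (fun i => if i ∈ T then (∑ j ∈ T, y j) / T.card else y i) ≤ F y := by
  classical
  suffices H : ∀ d : ℕ, ∀ y : Fin N → ℝ,
      (T.filter (fun i => y i ≠ (∑ j ∈ T, y j) / T.card)).card ≤ d →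
      F (fun i => if i ∈ T then (∑ j ∈ T, y j) / T.card else y i) ≤ F y from H _ y le_rfl
  intro d
  induction d with
  | zero =>
    intro y hy
    have hall : ∀ i ∈ T, y i = (∑ j ∈ T, y j) / T.card := by
      intro i hi
      by_contra hne
      have : i ∈ T.filter (fun i => y i ≠ (∑ j ∈ T, y j) / T.card) :=
        Finset.mem_filter.mpr ⟨hi, hne⟩
      have := Finset.card_pos.mpr ⟨i, this⟩
      omega
    have heq : (fun i => if i ∈ T then (∑ j ∈ T, y j) / T.card else y i) = y := by
      funext i
      by_cases hi : i ∈ T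
      · simp [hi, (hall i hi).symm]
      · simp [hi]
    rw [heq]
  | succ d ih =>
    intro y hy
    by_cases hle : (T.filter (fun i => y i ≠ (∑ j ∈ T, y j) / T.card)).card ≤ d
    · exact ih y hle
    · set μ := (∑ j ∈ T, y j) / T.card with hμdef
      have hfilpos : 0 < (T.filter (fun i => y i ≠ μ)).card := by omega
      obtain ⟨i₀, hi₀mem⟩ := Finset.card_pos.mp hfilpos
      rw [Finset.mem_filter] at hi₀mem
      have hTpos : 0 < T.card := Finset.card_pos.mpr ⟨i₀, hi₀mem.1⟩
      have hTcard : (T.card : ℝ) ≠ 0 := by positivity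
      have hsum : ∑ j ∈ T, y j = T.card * μ := by
        rw [hμdef]; field_simp
      -- exists coordinate above μ
      have hex_hi : ∃ i ∈ T, μ < y i := by
        by_contra hc
        push_neg at hc
        have hlt : ∑ j ∈ T, y j < ∑ _j ∈ T, μ := by
          refine Finset.sum_lt_sum (fun i hi => hc i hi) ⟨i₀, hi₀mem.1, ?_⟩
          exact lt_of_le_of_ne (hc _ hi₀mem.1) hi₀mem.2
        rw [Finset.sum_const, nsmul_eq_mul, hsum] at hlt
        exact lt_irrefl _ hlt
      have hex_lo : ∃ j ∈ T, y j < μ := by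
        by_contra hc
        push_neg at hc
        have hlt : ∑ _j ∈ T, μ < ∑ j ∈ T, y j := by
          refine Finset.sum_lt_sum (fun i hi => hc i hi) ⟨i₀, hi₀mem.1, ?_⟩
          exact lt_of_le_of_ne (hc _ hi₀mem.1) (Ne.symm hi₀mem.2)
        rw [Finset.sum_const, nsmul_eq_mul, hsum] at hlt
        exact lt_irrefl _ hlt
      obtain ⟨i, hiT, hi⟩ := hex_hi
      obtain ⟨j, hjT, hj⟩ := hex_lo
      have hij : i ≠ j := by
        intro h; subst h; exact absurd (hi.trans hj) (lt_irrefl _)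
      set y' := Function.update (Function.update y i μ) j (y i + y j - μ) with hy'def
      have hy'i : y' i = μ := by
        rw [hy'def, Function.update_of_ne hij, Function.update_self]
      have hy'j : y' j = y i + y j - μ := by
        rw [hy'def, Function.update_self]
      have hy'other : ∀ l, l ≠ i → l ≠ j → y' l = y l := fun l hli hlj => by
        rw [hy'def, Function.update_of_ne hlj, Function.update_of_ne hli]
      -- sums agree
      have hsum' : ∑ l ∈ T, y' l = ∑ l ∈ T, y l := by
        rw [hy'def, Finset.sum_update_of_mem hjT]
        have hiTj : i ∈ T \ {j} := Finset.mem_sdiff.mpr ⟨hiT, by simp [hij]⟩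
        rw [Finset.sum_update_of_mem hiTj]
        have h2 : ∑ l ∈ T, y l = y j + ∑ l ∈ T \ {j}, y l := by
          rw [Finset.sdiff_singleton_eq_erase, Finset.add_sum_erase _ _ hjT]
        have hiTj' : i ∈ T.erase j := Finset.mem_erase.mpr ⟨hij, hiT⟩
        have h3 : ∑ l ∈ T \ {j}, y l = y i + ∑ l ∈ (T \ {j}) \ {i}, y l := by
          simp only [Finset.sdiff_singleton_eq_erase]
          rw [Finset.add_sum_erase _ _ hiTj']
        rw [h2, h3]; ring
      have hμ' : (∑ l ∈ T, y' l) / T.card = μ := by rw [hsum']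
      -- the averaged point is unchanged
      have hM : (fun l => if l ∈ T then (∑ jj ∈ T, y' jj) / T.card else y' l)
          = (fun l => if l ∈ T then μ else y l) := by
        funext l
        by_cases hl : l ∈ T
        · simp [hl, hμ']
        · have hli : l ≠ i := fun h => hl (h ▸ hiT)
          have hlj : l ≠ j := fun h => hl (h ▸ hjT)
          simp [hl, hy'other l hli hlj]
      -- filter cardinality decreases
      have hfil : (T.filter (fun l => y' l ≠ (∑ jj ∈ T, y' jj) / T.card)).card ≤ d := by
        have hrw : (T.filter (fun l => y' l ≠ (∑ jj ∈ T, y' jj) / T.card))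
            = T.filter (fun l => y' l ≠ μ) := by
          apply Finset.filter_congr; intro l _; rw [hμ']
        rw [hrw]
        have hsub : T.filter (fun l => y' l ≠ μ) ⊆ (T.filter (fun l => y l ≠ μ)).erase i := by
          intro l hl
          rw [Finset.mem_filter] at hl
          have hli : l ≠ i := by
            intro h; subst h; exact hl.2 hy'i
          rw [Finset.mem_erase, Finset.mem_filter]
          refine ⟨hli, hl.1, ?_⟩
          by_cases hlj : l = j
          · subst hlj; exact hj.ne
          · rw [← hy'other l hli hlj]; exact hl.2
        have hc1 := Finset.card_le_card hsub
        have hmemfil : i ∈ T.filter (fun l => y l ≠ μ) :=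
          Finset.mem_filter.mpr ⟨hiT, hi.ne'⟩
        have hc2 := Finset.card_erase_of_mem hmemfil
        omega
      -- convexity step
      have hcv := hconv y (y ∘ Equiv.swap i j) (fun l hl => by
        have hli : l ≠ i := fun h => hl (h ▸ hiT)
        have hlj : l ≠ j := fun h => hl (h ▸ hjT)
        show y (Equiv.swap i j l) = y l
        rw [Equiv.swap_apply_of_ne_of_ne hli hlj])
      set θ := (y i - μ) / (y i - y j) with hθdef
      have hden : 0 < y i - y j := by linarith
      have hθ0 : 0 ≤ θ := div_nonneg (by linarith) hden.le
      have hθ1 : θ ≤ 1 := by rw [div_le_one hden]; linarith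
      have hcomb := hcv.2 (Set.mem_univ (0 : ℝ)) (Set.mem_univ (1 : ℝ))
        (by linarith : (0:ℝ) ≤ 1 - θ) hθ0 (by ring)
      simp only [smul_eq_mul, mul_zero, mul_one, zero_add] at hcomb
      have h0 : y + (0 : ℝ) • (y ∘ Equiv.swap i j - y) = y := by simp
      have h1 : y + (1 : ℝ) • (y ∘ Equiv.swap i j - y) = y ∘ Equiv.swap i j := by
        funext l; simp
      have hyθ : y + θ • (y ∘ Equiv.swap i j - y) = y' := by
        funext l
        by_cases hli : l = i
        · subst hli
          have hmul : θ * (y j - y l) = -(y l - μ) := by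
            rw [hθdef]; field_simp; ring
          have : y l + θ * (y (Equiv.swap l j l) - y l) = μ := by
            rw [Equiv.swap_apply_left, hmul]; ring
          simpa [hy'i] using this
        · by_cases hlj : l = j
          · subst hlj
            have hmul : θ * (y i - y l) = y i - μ := by
              rw [hθdef]; field_simp
            have : y l + θ * (y (Equiv.swap i l l) - y l) = y i + y l - μ := by
              rw [Equiv.swap_apply_right, hmul]; ring
            simpa [hy'j] using this
          · have : y l + θ * (y (Equiv.swap i j l) - y l) = y l := by
              rw [Equiv.swap_apply_of_ne_of_ne hli hlj]; ring
            simpa [hy'other l hli hlj] using this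
      rw [h0, h1, hyθ, hsym i hiT j hjT y] at hcomb
      have hstep : F y' ≤ F y := by
        calc F y' ≤ (1 - θ) * F y + θ * F y := hcomb
        _ = F y := by ring
      have hfinal := ih y' hfil
      rw [hM] at hfinal
      calc F (fun l => if l ∈ T then μ else y l) ≤ F y' := hfinal
        _ ≤ F y := hstep


theorem stmt6 (m k : ℕ) (hm : 2 ≤ m) (hk : 1 ≤ k) (hkm : k ≤ m - 1)
    (φ : (Fin (m + 1) → ℂ) → ℝ)
    (hsm : ContDiffOn ℝ (⊤ : ℕ∞) φ {z : Fin (m + 1) → ℂ | z ≠ 0})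
    (hscal : ScalInv m φ) (hG : GInv m k φ) (hadm : Adm m φ)
    (x : Fin (m + 1) → ℝ) (hx : ∀ i, 0 < x i) :
    let A : Fin (m + 1) → ℂ := fun i => if i = 0 then 1 else (x i : ℂ)
    let ζv : ℝ := (∏ i ∈ Finset.univ.filter (fun i : Fin (m + 1) => k + 1 ≤ (i : ℕ)), x i) ^
      (1 / ((m : ℝ) - (k : ℝ)))
    let B : Fin (m + 1) → ℂ := fun i => if (i : ℕ) ≤ k then A i else (ζv : ℂ)
    φ B - psi m k B ≤ φ A - psi m k A := by
  intro A ζv B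
  classical
  have hkm' : k < m := by omega
  have hmkne : (m : ℝ) - (k : ℝ) ≠ 0 := by
    have : (k : ℝ) < (m : ℝ) := by exact_mod_cast hkm'
    linarith
  have hA : A = fun i => if i = 0 then 1 else (x i : ℂ) := rfl
  have hζ : ζv = (∏ i ∈ Finset.univ.filter (fun i : Fin (m + 1) => k + 1 ≤ (i : ℕ)), x i) ^
      (1 / ((m : ℝ) - (k : ℝ))) := rfl
  have hB : B = fun i : Fin (m + 1) => if (i : ℕ) ≤ k then A i else (ζv : ℂ) := rfl
  set T : Finset (Fin (m + 1)) :=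
    Finset.univ.filter (fun i : Fin (m + 1) => k + 1 ≤ (i : ℕ)) with hTdef
  have hmemT : ∀ i : Fin (m + 1), i ∈ T ↔ k + 1 ≤ (i : ℕ) := by
    intro i; rw [hTdef]; simp
  have hA0 : ∀ i : Fin (m + 1), i ∈ T → i ≠ 0 := by
    intro i hi h0
    have h1 := (hmemT i).1 hi
    rw [h0] at h1
    simp at h1
  have h0T : (0 : Fin (m + 1)) ∉ T := fun h => (hA0 0 h) rfl
  -- cardinality of T
  have hcard1 : (Finset.univ.filter (fun i : Fin (m + 1) => (i : ℕ) < k + 1)).card = k + 1 := by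
    have himg : Finset.univ.filter (fun i : Fin (m + 1) => (i : ℕ) < k + 1)
        = Finset.map (Fin.castLEEmb (by omega : k + 1 ≤ m + 1)) Finset.univ := by
      ext i
      simp only [Finset.mem_filter, Finset.mem_univ, true_and, Finset.mem_map]
      constructor
      · intro hi
        exact ⟨⟨(i : ℕ), hi⟩, by simp [Fin.castLEEmb, Fin.ext_iff]⟩
      · rintro ⟨j, -, rfl⟩
        simp [Fin.castLEEmb]
        omega
    rw [himg, Finset.card_map, Finset.card_univ, Fintype.card_fin]
  have hcardT : T.card = m - k := by
    have hpart := Finset.card_filter_add_card_filter_not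
      (s := (Finset.univ : Finset (Fin (m + 1)))) (p := fun i : Fin (m + 1) => k + 1 ≤ (i : ℕ))
    have hneg : Finset.univ.filter (fun i : Fin (m + 1) => ¬ (k + 1 ≤ (i : ℕ)))
        = Finset.univ.filter (fun i : Fin (m + 1) => (i : ℕ) < k + 1) :=
      Finset.filter_congr (fun i _ => by omega)
    rw [hneg, hcard1, Finset.card_univ, Fintype.card_fin] at hpart
    rw [hTdef]
    omega
  have hcardT' : ((T.card : ℝ)) = (m : ℝ) - (k : ℝ) := by
    rw [hcardT, Nat.cast_sub hkm'.le]
  set P : ℝ := ∏ i ∈ T, x i with hPdef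
  have hPpos : 0 < P := Finset.prod_pos (fun i _ => hx i)
  have hζP : ζv = P ^ (1 / ((m : ℝ) - (k : ℝ))) := hζ
  have hζpos : 0 < ζv := by
    rw [hζP]; exact Real.rpow_pos_of_pos hPpos _
  have hζpow : ζv ^ (T.card) = P := by
    rw [hζP, ← Real.rpow_natCast (P ^ (1 / ((m : ℝ) - (k : ℝ)))) T.card,
      ← Real.rpow_mul hPpos.le, hcardT', one_div_mul_cancel hmkne, Real.rpow_one]
  -- the logarithmic coordinates
  set yA : Fin (m + 1) → ℝ := fun i => if i = 0 then 0 else Real.log (x i) with hyAdef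
  have hAz : A = fun i => Complex.exp ((yA i : ℂ)) := by
    funext i
    simp only [hA, hyAdef]
    by_cases h : i = 0
    · simp [h]
    · rw [if_neg h, if_neg h, ← Complex.ofReal_exp, Real.exp_log (hx i)]
  have hsumyA : ∑ i ∈ T, yA i = Real.log P := by
    have h1 : ∑ i ∈ T, yA i = ∑ i ∈ T, Real.log (x i) :=
      Finset.sum_congr rfl (fun i hi => by simp only [hyAdef]; rw [if_neg (hA0 i hi)])
    rw [h1, hPdef, Real.log_prod (fun i _ => (hx i).ne')]
  have hμ : Real.exp ((∑ i ∈ T, yA i) / T.card) = ζv := by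
    rw [hsumyA, hζP, Real.rpow_def_of_pos hPpos]
    congr 1
    rw [hcardT']
    ring
  have hBz : B = fun i => Complex.exp
      (((if i ∈ T then (∑ j ∈ T, yA j) / T.card else yA i : ℝ) : ℂ)) := by
    funext i
    by_cases hi : i ∈ T
    · have hik : ¬ ((i : ℕ) ≤ k) := by have := (hmemT i).1 hi; omega
      rw [if_pos hi]
      simp only [hB, if_neg hik]
      rw [← Complex.ofReal_exp, hμ]
    · have hik : (i : ℕ) ≤ k := by
        by_contra hc
        exact hi ((hmemT i).2 (by omega))
      rw [if_neg hi]
      simp only [hB, if_pos hik]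
      exact congrFun hAz i
  have hAne : ∀ i, A i ≠ 0 := fun i => by rw [hAz]; exact Complex.exp_ne_zero _
  have hBne : ∀ i, B i ≠ 0 := fun i => by rw [hBz]; exact Complex.exp_ne_zero _
  -- the symmetrization inequality
  have hsym : ∀ i ∈ T, ∀ j ∈ T, ∀ y : Fin (m + 1) → ℝ,
      (fun y : Fin (m + 1) → ℝ =>
        ((m : ℝ) + 1) * Real.log (nsq (fun l => Complex.exp ((y l : ℂ))))
          + φ (fun l => Complex.exp ((y l : ℂ)))) (y ∘ Equiv.swap i j)
      = (fun y : Fin (m + 1) → ℝ =>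
        ((m : ℝ) + 1) * Real.log (nsq (fun l => Complex.exp ((y l : ℂ))))
          + φ (fun l => Complex.exp ((y l : ℂ)))) y := by
    intro i hi j hj y
    show ((m : ℝ) + 1) * Real.log (nsq ((fun l => Complex.exp ((y l : ℂ))) ∘ (Equiv.swap i j)))
        + φ ((fun l => Complex.exp ((y l : ℂ))) ∘ (Equiv.swap i j)) = _
    rw [Stmt6Aux.nsq_comp_equiv, hG.2.1 i j ((hmemT i).1 hi) ((hmemT j).1 hj)]
  have hconv : ∀ y y' : Fin (m + 1) → ℝ, (∀ i, i ∉ T → y' i = y i) →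
      ConvexOn ℝ Set.univ (fun s : ℝ =>
        (fun y : Fin (m + 1) → ℝ =>
          ((m : ℝ) + 1) * Real.log (nsq (fun l => Complex.exp ((y l : ℂ))))
            + φ (fun l => Complex.exp ((y l : ℂ)))) (y + s • (y' - y))) := by
    intro y y' hy'
    by_cases hyy : y' = y
    · subst hyy
      simp only [sub_self, smul_zero, add_zero]
      exact convexOn_const _ convex_univ
    · obtain ⟨i0, hi0⟩ : ∃ i, (y' - y) i ≠ 0 := by
        by_contra hc
        push_neg at hc
        apply hyy
        funext l
        have := hc l
        rw [Pi.sub_apply, sub_eq_zero] at this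
        exact this
      have h00 : (y' - y) 0 = 0 := by
        rw [Pi.sub_apply, hy' 0 h0T, sub_self]
      have hncc : ∃ i j, (y' - y) i ≠ (y' - y) j := ⟨i0, 0, by rw [h00]; exact hi0⟩
      have hcl := conv_line m k φ hsm hG hadm y (y' - y) hncc
      have hfe : (fun s : ℝ =>
          ((m : ℝ) + 1) * Real.log (nsq (fun l => Complex.exp (((y + s • (y' - y)) l : ℂ))))
            + φ (fun l => Complex.exp (((y + s • (y' - y)) l : ℂ))))
          = (fun s : ℝ =>
          ((m : ℝ) + 1) * Real.log (nsq (fun l => Complex.exp (((y l + s * (y' - y) l : ℝ) : ℂ))))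
            + φ (fun l => Complex.exp (((y l + s * (y' - y) l : ℝ) : ℂ)))) := by
        funext s
        have : (fun l => Complex.exp (((y + s • (y' - y)) l : ℂ)))
            = fun l => Complex.exp (((y l + s * (y' - y) l : ℝ) : ℂ)) := by
          funext l
          simp [Pi.add_apply, Pi.smul_apply, smul_eq_mul]
        rw [this]
      rw [hfe]
      exact hcl
  have hrobin := robin T (fun y : Fin (m + 1) → ℝ =>
      ((m : ℝ) + 1) * Real.log (nsq (fun l => Complex.exp ((y l : ℂ))))
        + φ (fun l => Complex.exp ((y l : ℂ)))) hsym hconv yA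
  simp only [] at hrobin
  have hBzz : (fun l => Complex.exp
      (((if l ∈ T then (∑ j ∈ T, yA j) / (T.card : ℝ) else yA l : ℝ) : ℂ))) = B := by
    rw [hBz]
  have hAzz : (fun l => Complex.exp ((yA l : ℂ))) = A := hAz.symm
  rw [hAzz] at hrobin
  have hPhi_le : ((m : ℝ) + 1) * Real.log (nsq B) + φ B
      ≤ ((m : ℝ) + 1) * Real.log (nsq A) + φ A := by
    have := hrobin
    rw [show (fun l => Complex.exp
        (((if l ∈ T then (∑ j ∈ T, yA j) / (T.card : ℝ) else yA l : ℝ) : ℂ))) = B from hBzz] at this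
    exact this
  -- rewrite the psi's
  have hpsi : ∀ z : Fin (m + 1) → ℂ, (∀ i, z i ≠ 0) →
      φ z - psi m k z = (((m : ℝ) + 1) * Real.log (nsq z) + φ z)
        - min (2 * ((m : ℝ) + 1) / ((k : ℝ) + 1) * Real.log
            (∏ i ∈ Finset.univ.filter (fun i : Fin (m + 1) => (i : ℕ) ≤ k), ‖z i‖))
          (2 * ((m : ℝ) + 1) / ((m : ℝ) - (k : ℝ)) * Real.log
            (∏ i ∈ Finset.univ.filter (fun i : Fin (m + 1) => k + 1 ≤ (i : ℕ)),
              ‖z i‖)) := by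
    intro z hz
    have hprod1 : 0 < ∏ i ∈ Finset.univ.filter (fun i : Fin (m + 1) => (i : ℕ) ≤ k),
        ‖z i‖ := Finset.prod_pos fun i _ => norm_pos_iff.mpr (hz i)
    have hprod2 : 0 < ∏ i ∈ Finset.univ.filter (fun i : Fin (m + 1) => k + 1 ≤ (i : ℕ)),
        ‖z i‖ := Finset.prod_pos fun i _ => norm_pos_iff.mpr (hz i)
    have hnsqz : 0 < nsq z := Stmt6Aux.nsq_pos 0 (hz 0)
    have e1 : psi1 m k z = 2 * ((m : ℝ) + 1) / ((k : ℝ) + 1) * Real.log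
        (∏ i ∈ Finset.univ.filter (fun i : Fin (m + 1) => (i : ℕ) ≤ k), ‖z i‖)
        - ((m : ℝ) + 1) * Real.log (nsq z) := by
      unfold psi1
      rw [Real.log_div (by positivity) (by positivity), Real.log_rpow hprod1,
        Real.log_rpow hnsqz]
    have e2 : psi2 m k z = 2 * ((m : ℝ) + 1) / ((m : ℝ) - (k : ℝ)) * Real.log
        (∏ i ∈ Finset.univ.filter (fun i : Fin (m + 1) => k + 1 ≤ (i : ℕ)), ‖z i‖)
        - ((m : ℝ) + 1) * Real.log (nsq z) := by
      unfold psi2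
      rw [Real.log_div (by positivity) (by positivity), Real.log_rpow hprod2,
        Real.log_rpow hnsqz]
    unfold psi
    rw [e1, e2, min_sub_sub_right]
    ring
  rw [hpsi B hBne, hpsi A hAne]
  -- the two minima agree
  have hmin1 : ∏ i ∈ Finset.univ.filter (fun i : Fin (m + 1) => (i : ℕ) ≤ k), ‖B i‖
      = ∏ i ∈ Finset.univ.filter (fun i : Fin (m + 1) => (i : ℕ) ≤ k), ‖A i‖ := by
    refine Finset.prod_congr rfl fun i hi => ?_
    rw [Finset.mem_filter] at hi
    simp only [hB]
    rw [if_pos hi.2]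
  have hmin2 : ∏ i ∈ Finset.univ.filter (fun i : Fin (m + 1) => k + 1 ≤ (i : ℕ)), ‖B i‖
      = ∏ i ∈ Finset.univ.filter (fun i : Fin (m + 1) => k + 1 ≤ (i : ℕ)), ‖A i‖ := by
    rw [← hTdef]
    have hBT : ∏ i ∈ T, ‖B i‖ = ζv ^ T.card := by
      rw [Finset.prod_congr rfl (fun i hi => ?_), Finset.prod_const]
      have hik : ¬ ((i : ℕ) ≤ k) := by have := (hmemT i).1 hi; omega
      simp only [hB]
      rw [if_neg hik, Complex.norm_real, Real.norm_eq_abs, abs_of_pos hζpos]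
    have hAT : ∏ i ∈ T, ‖A i‖ = P := by
      rw [hPdef]
      refine Finset.prod_congr rfl fun i hi => ?_
      simp only [hA]
      rw [if_neg (hA0 i hi), Complex.norm_real, Real.norm_eq_abs, abs_of_pos (hx i)]
    rw [hBT, hAT, hζpow]
  rw [hmin1, hmin2]
  linarith [hPhi_le]
end
end

section
/- Let φ : ℂ^{m+1}\{0} → ℝ be smooth, scaling-invariant, G-invariant and g-admissible. Then for all real numbers x_0,…,x_k, x_{k+2},…,x_m > 0, (φ−ψ)(x_0,x_1,…,x_k,1,x_{k+2},…,x_m) ≥ (φ−ψ)(η,η,…,η,1,x_{k+2},…,x_m), where η = (x_0 x_1⋯x_k)^{1/(k+1)} occupies the first k+1 coordinates. -/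
open Complex MeasureTheory Finset

noncomputable section

lemma contDiff_nsq {n : ℕ} : ContDiff ℝ (⊤ : ℕ∞) (nsq : (Fin n → ℂ) → ℝ) := by
  have : (nsq : (Fin n → ℂ) → ℝ) = fun z => ∑ i, ((z i).re ^ 2 + (z i).im ^ 2) := by
    funext z
    simp only [nsq]
    refine Finset.sum_congr rfl fun i _ => ?_
    rw [Complex.sq_norm, Complex.normSq_apply]; ring
  rw [this]
  apply ContDiff.sum
  intro i _
  have hz : ContDiff ℝ (⊤ : ℕ∞) (fun z : Fin n → ℂ => z i) := contDiff_apply ℝ ℂ i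
  exact ((Complex.reCLM.contDiff.comp hz).pow 2).add ((Complex.imCLM.contDiff.comp hz).pow 2)

lemma nsq_pos {n : ℕ} {z : Fin n → ℂ} (h : z ≠ 0) : 0 < nsq z := by
  obtain ⟨i, hi⟩ := Function.ne_iff.1 h
  refine Finset.sum_pos' (fun j _ => by positivity) ⟨i, Finset.mem_univ i, ?_⟩
  have : ‖z i‖ ≠ 0 := by simpa using hi
  positivity


variable {n : ℕ}

-- F has fderiv at nonzero-avoiding points; here assume smooth along whole line.
lemma lineDeriv_line {F : (Fin n → ℂ) → ℝ} {p v : Fin n → ℂ}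
    (hF : ∀ s : ℂ, ContDiffAt ℝ (⊤ : ℕ∞) F (p + s • v)) (s u : ℂ) :
    lineDeriv ℝ (fun t : ℂ => F (p + t • v)) s u = fderiv ℝ F (p + s • v) (u • v) := by
  have hdF : HasFDerivAt F (fderiv ℝ F (p + s • v)) (p + s • v) :=
    ((hF s).differentiableAt (by simp)).hasFDerivAt
  have hline : HasDerivAt (fun r : ℝ => p + (s + r • u) • v) (u • v) 0 := by
    have h1 : HasDerivAt (fun r : ℝ => r • u) ((1 : ℝ) • u) 0 :=
      (hasDerivAt_id (0 : ℝ)).smul_const u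
    have h2 : HasDerivAt (fun r : ℝ => (s + r • u) • v) (((1:ℝ) • u) • v) 0 :=
      (h1.const_add s).smul_const v
    simpa using h2.const_add p
  have hdF' : HasFDerivAt F (fderiv ℝ F (p + s • v)) (p + (s + (0:ℝ) • u) • v) := by
    convert hdF using 2; simp
  have h := hdF'.comp_hasDerivAt 0 hline
  rw [lineDeriv]
  exact (h.congr_deriv rfl).deriv

lemma lap_line_eq {F : (Fin n → ℂ) → ℝ} {p v : Fin n → ℂ}
    (hF : ∀ s : ℂ, ContDiffAt ℝ (⊤ : ℕ∞) F (p + s • v)) :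
    lap (fun t : ℂ => F (p + t • v)) 0 =
      fderiv ℝ (fderiv ℝ F) p v v +
      fderiv ℝ (fderiv ℝ F) p (Complex.I • v) (Complex.I • v) := by
  have hp : ContDiffAt ℝ (⊤ : ℕ∞) F p := by simpa using hF 0
  have hD2 : HasFDerivAt (fderiv ℝ F) (fderiv ℝ (fderiv ℝ F) p) p := by
    have h2 : ContDiffAt ℝ 1 (fderiv ℝ F) p := by
      have := hp.fderiv_right (m := 1) (WithTop.coe_le_coe.2 le_top)
      exact this
    exact (h2.differentiableAt one_ne_zero).hasFDerivAt
  have key : ∀ u : ℂ,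
      lineDeriv ℝ (fun s : ℂ => lineDeriv ℝ (fun t : ℂ => F (p + t • v)) s u) 0 u =
      fderiv ℝ (fderiv ℝ F) p (u • v) (u • v) := by
    intro u
    have hfun : (fun s : ℂ => lineDeriv ℝ (fun t : ℂ => F (p + t • v)) s u) =
        fun s : ℂ => fderiv ℝ F (p + s • v) (u • v) := by
      funext s; exact lineDeriv_line hF s u
    rw [hfun, lineDeriv]
    have hcurve : HasDerivAt (fun r : ℝ => p + ((0:ℂ) + r • u) • v) (u • v) 0 := by
      have h1 : HasDerivAt (fun r : ℝ => r • u) ((1 : ℝ) • u) 0 :=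
        (hasDerivAt_id (0 : ℝ)).smul_const u
      have h2 : HasDerivAt (fun r : ℝ => ((0:ℂ) + r • u) • v) (((1:ℝ) • u) • v) 0 :=
        (h1.const_add 0).smul_const v
      simpa using h2.const_add p
    have hc : HasDerivAt (fun r : ℝ => fderiv ℝ F (p + ((0:ℂ) + r • u) • v))
        (fderiv ℝ (fderiv ℝ F) p (u • v)) 0 := by
      have hD2' : HasFDerivAt (fderiv ℝ F) (fderiv ℝ (fderiv ℝ F) p)
          (p + ((0:ℂ) + (0:ℝ) • u) • v) := by
        convert hD2 using 2; simp
      exact hD2'.comp_hasDerivAt 0 hcurve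
    have happ := hc.clm_apply (hasDerivAt_const 0 (u • v))
    simp only [map_zero, add_zero] at happ
    have : deriv (fun r : ℝ => (fderiv ℝ F (p + ((0:ℂ) + r • u) • v)) (u • v)) 0 =
        fderiv ℝ (fderiv ℝ F) p (u • v) (u • v) := by
      simpa using happ.deriv
    simpa using this
  have k1 := key 1
  have kI := key Complex.I
  rw [lap, k1, kI, one_smul]

section curve
variable {F : (Fin n → ℂ) → ℝ} (z γ : Fin n → ℂ)

lemma hasDerivAt_expCurve (τ : ℝ) :
    HasDerivAt (fun σ : ℝ => fun i => z i * Complex.exp (γ i * σ))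
      (fun i => γ i * (z i * Complex.exp (γ i * τ))) τ := by
  rw [hasDerivAt_pi]
  intro i
  have h0 : HasDerivAt (fun σ : ℝ => (σ : ℂ)) 1 τ := by
    simpa using (hasDerivAt_id τ).ofReal_comp
  have h1 : HasDerivAt (fun σ : ℝ => γ i * (σ : ℂ)) (γ i * 1) τ := h0.const_mul (γ i)
  have h2 := h1.cexp
  have h3 := h2.const_mul (z i)
  rw [show γ i * (z i * Complex.exp (γ i * τ)) = z i * (Complex.exp (γ i * τ) * (γ i * 1)) by ring]
  exact h3

lemma hasDerivAt_F_expCurve (τ : ℝ)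
    (hF : DifferentiableAt ℝ F (fun i => z i * Complex.exp (γ i * τ))) :
    HasDerivAt (fun σ : ℝ => F (fun i => z i * Complex.exp (γ i * σ)))
      (fderiv ℝ F (fun i => z i * Complex.exp (γ i * τ))
        (fun i => γ i * (z i * Complex.exp (γ i * τ)))) τ :=
  hF.hasFDerivAt.comp_hasDerivAt τ (hasDerivAt_expCurve z γ τ)

lemma hasDerivAt_dF_expCurve (τ : ℝ)
    (hF : ContDiffAt ℝ (⊤ : ℕ∞) F (fun i => z i * Complex.exp (γ i * τ))) :
    HasDerivAt (fun σ : ℝ => fderiv ℝ F (fun i => z i * Complex.exp (γ i * σ))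
        (fun i => γ i * (z i * Complex.exp (γ i * σ))))
      (fderiv ℝ (fderiv ℝ F) (fun i => z i * Complex.exp (γ i * τ))
          (fun i => γ i * (z i * Complex.exp (γ i * τ)))
          (fun i => γ i * (z i * Complex.exp (γ i * τ))) +
        fderiv ℝ F (fun i => z i * Complex.exp (γ i * τ))
          (fun i => γ i * (γ i * (z i * Complex.exp (γ i * τ))))) τ := by
  have hD2 : HasFDerivAt (fderiv ℝ F)
      (fderiv ℝ (fderiv ℝ F) (fun i => z i * Complex.exp (γ i * τ)))
      (fun i => z i * Complex.exp (γ i * τ)) :=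
    ((hF.fderiv_right (m := 1) (WithTop.coe_le_coe.2 le_top)).differentiableAt one_ne_zero).hasFDerivAt
  have hc : HasDerivAt (fun σ : ℝ => fderiv ℝ F (fun i => z i * Complex.exp (γ i * σ)))
      (fderiv ℝ (fderiv ℝ F) (fun i => z i * Complex.exp (γ i * τ))
        (fun i => γ i * (z i * Complex.exp (γ i * τ)))) τ :=
    hD2.comp_hasDerivAt τ (hasDerivAt_expCurve z γ τ)
  have hW : HasDerivAt (fun σ : ℝ => fun i => γ i * (z i * Complex.exp (γ i * σ)))
      (fun i => γ i * (γ i * (z i * Complex.exp (γ i * τ)))) τ := by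
    have := hasDerivAt_expCurve (fun i => γ i * z i) γ τ
    have e1 : (fun σ : ℝ => fun i => γ i * z i * Complex.exp (γ i * σ)) =
        (fun σ : ℝ => fun i => γ i * (z i * Complex.exp (γ i * σ))) := by
      funext σ i; ring
    have e2 : (fun i => γ i * (γ i * z i * Complex.exp (γ i * ↑τ))) =
        (fun i => γ i * (γ i * (z i * Complex.exp (γ i * τ)))) := by
      funext i; ring
    rw [e1, e2] at this; exact this
  exact hc.clm_apply hW

end curve

lemma expCurve_zero (z γ : Fin n → ℂ) : (fun i => z i * Complex.exp (γ i * ((0:ℝ):ℂ))) = z := by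
  funext i; simp

lemma phase_identity {F : (Fin n → ℂ) → ℝ} (p : Fin n → ℂ) (γ : Fin n → ℂ)
    (hF : ∀ τ : ℝ, ContDiffAt ℝ (⊤ : ℕ∞) F (fun i => p i * Complex.exp (γ i * τ)))
    (hconst : ∀ τ : ℝ, F (fun i => p i * Complex.exp (γ i * τ)) = F p) :
    fderiv ℝ (fderiv ℝ F) p (fun i => γ i * p i) (fun i => γ i * p i) +
      fderiv ℝ F p (fun i => γ i * (γ i * p i)) = 0 := by
  have hKconst : (fun τ : ℝ => F (fun i => p i * Complex.exp (γ i * τ))) = fun _ => F p := by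
    funext τ; exact hconst τ
  have hd0 : ∀ τ : ℝ, fderiv ℝ F (fun i => p i * Complex.exp (γ i * τ))
      (fun i => γ i * (p i * Complex.exp (γ i * τ))) = 0 := by
    intro τ
    have h1 := hasDerivAt_F_expCurve (F := F) p γ τ ((hF τ).differentiableAt (by simp))
    have h2 : HasDerivAt (fun τ : ℝ => F (fun i => p i * Complex.exp (γ i * τ))) 0 τ := by
      rw [hKconst]; exact hasDerivAt_const τ _
    exact h1.unique h2
  have hdfun : (fun τ : ℝ => fderiv ℝ F (fun i => p i * Complex.exp (γ i * τ))
      (fun i => γ i * (p i * Complex.exp (γ i * τ)))) = fun _ => (0:ℝ) := by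
    funext τ; exact hd0 τ
  have h3 := hasDerivAt_dF_expCurve (F := F) p γ 0 (hF 0)
  have h4 : HasDerivAt (fun τ : ℝ => fderiv ℝ F (fun i => p i * Complex.exp (γ i * τ))
      (fun i => γ i * (p i * Complex.exp (γ i * τ)))) 0 0 := by
    rw [hdfun]; exact hasDerivAt_const 0 _
  have h5 := h3.unique h4
  have e0 := expCurve_zero p γ
  have e1 : (fun i => γ i * (p i * Complex.exp (γ i * ((0:ℝ):ℂ)))) = fun i => γ i * p i := by
    funext i; simp
  have e2 : (fun i => γ i * (γ i * (p i * Complex.exp (γ i * ((0:ℝ):ℂ))))) =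
      fun i => γ i * (γ i * p i) := by
    funext i; simp
  rw [e0, e1, e2] at h5
  exact h5

lemma phi_phases {φ : (Fin n → ℂ) → ℝ}
    (hph : ∀ l : Fin n, ∀ θ : ℝ, ∀ z : Fin n → ℂ,
      φ (Function.update z l (Complex.exp ((θ : ℂ) * Complex.I) * z l)) = φ z)
    (θ : Fin n → ℝ) (z : Fin n → ℂ) :
    φ (fun i => Complex.exp ((θ i : ℂ) * Complex.I) * z i) = φ z := by
  have key : ∀ s : Finset (Fin n),
      φ (fun i => if i ∈ s then Complex.exp ((θ i : ℂ) * Complex.I) * z i else z i) = φ z := by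
    intro s
    induction s using Finset.induction_on with
    | empty => simp
    | @insert a s ha ih =>
      have hupd : (fun i => if i ∈ insert a s then Complex.exp ((θ i : ℂ) * Complex.I) * z i
            else z i) =
          Function.update (fun i => if i ∈ s then Complex.exp ((θ i : ℂ) * Complex.I) * z i
            else z i) a (Complex.exp ((θ a : ℂ) * Complex.I) *
              (fun i => if i ∈ s then Complex.exp ((θ i : ℂ) * Complex.I) * z i else z i) a) := by
        funext i
        by_cases h : i = a
        · subst h; simp [Function.update_self, ha]
        · simp [Function.update_of_ne h, Finset.mem_insert, h]
      rw [hupd, hph a (θ a) _, ih]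
  have := key Finset.univ
  simpa using this

lemma nsq_comp_equiv (z : Fin n → ℂ) (e : Equiv.Perm (Fin n)) : nsq (z ∘ e) = nsq z := by
  simpa [nsq] using Equiv.sum_comp e (fun i => ‖z i‖ ^ 2)

lemma hasDerivAt_along {F : (Fin n → ℂ) → ℝ} {B : Fin n → ℂ}
    (hF : DifferentiableAt ℝ F B) (w : Fin n → ℂ) :
    HasDerivAt (fun s : ℝ => F (B + s • w)) (fderiv ℝ F B w) 0 := by
  have hline : HasDerivAt (fun s : ℝ => B + s • w) w 0 := by
    simpa using ((hasDerivAt_id (0:ℝ)).smul_const w).const_add B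
  have hF' : HasFDerivAt F (fderiv ℝ F B) (B + (0:ℝ) • w) := by
    convert hF.hasFDerivAt using 2; simp
  exact hF'.comp_hasDerivAt 0 hline


set_option maxHeartbeats 1000000 in
set_option synthInstance.maxHeartbeats 100000 in
theorem stmt7 (m k : ℕ) (hm : 2 ≤ m) (hk : 1 ≤ k) (hkm : k ≤ m - 1)
    (φ : (Fin (m + 1) → ℂ) → ℝ)
    (hsm : ContDiffOn ℝ (⊤ : ℕ∞) φ {z : Fin (m + 1) → ℂ | z ≠ 0})
    (hscal : ScalInv m φ) (hG : GInv m k φ) (hadm : Adm m φ)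
    (x : Fin (m + 1) → ℝ) (hx : ∀ i, 0 < x i) :
    let A : Fin (m + 1) → ℂ := fun i => if (i : ℕ) = k + 1 then 1 else (x i : ℂ)
    let ηv : ℝ := (∏ i ∈ Finset.univ.filter (fun i : Fin (m + 1) => (i : ℕ) ≤ k), x i) ^
      (1 / ((k : ℝ) + 1))
    let B : Fin (m + 1) → ℂ := fun i => if (i : ℕ) ≤ k then (ηv : ℂ) else A i
    φ B - psi m k B ≤ φ A - psi m k A := by
  intro A ηv B
  have hAdef : A = fun i : Fin (m + 1) => if (i : ℕ) = k + 1 then 1 else ((x i : ℝ) : ℂ) := rfl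
  have hηdef : ηv = (∏ i ∈ Finset.univ.filter (fun i : Fin (m + 1) => (i : ℕ) ≤ k), x i) ^
      (1 / ((k : ℝ) + 1)) := rfl
  have hBdef : B = fun i : Fin (m + 1) => if (i : ℕ) ≤ k then ((ηv : ℝ) : ℂ) else A i := rfl
  have hk1m : k + 1 < m + 1 := by omega
  set j1 : Fin (m + 1) := ⟨k + 1, hk1m⟩ with hj1
  set i0 : Fin (m + 1) := ⟨0, by omega⟩ with hi0
  have hOpen : IsOpen {z : Fin (m + 1) → ℂ | z ≠ 0} := isOpen_compl_singleton
  set F : (Fin (m + 1) → ℂ) → ℝ := fun z => ((m : ℝ) + 1) * Real.log (nsq z) + φ z with hFdef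
  have hFC : ∀ z : Fin (m + 1) → ℂ, z ≠ 0 → ContDiffAt ℝ (⊤ : ℕ∞) F z := by
    intro z hz
    have h1 : ContDiffAt ℝ (⊤ : ℕ∞) (fun z : Fin (m + 1) → ℂ => Real.log (nsq z)) z :=
      ((contDiff_nsq (n := m + 1)).contDiffAt).log (nsq_pos hz).ne'
    have h2 : ContDiffAt ℝ (⊤ : ℕ∞) φ z := hsm.contDiffAt (hOpen.mem_nhds hz)
    exact (contDiffAt_const.mul h1).add h2
  have hxprod : 0 < ∏ i ∈ Finset.univ.filter (fun i : Fin (m + 1) => (i : ℕ) ≤ k), x i :=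
    Finset.prod_pos fun i _ => hx i
  have hη : 0 < ηv := by rw [hηdef]; exact Real.rpow_pos_of_pos hxprod _
  have hcard : (Finset.univ.filter (fun i : Fin (m + 1) => (i : ℕ) ≤ k)).card = k + 1 := by
    have he : (Finset.univ.filter (fun i : Fin (m + 1) => (i : ℕ) ≤ k)) =
        Finset.Iic (⟨k, by omega⟩ : Fin (m + 1)) := by
      ext i; simp [Finset.mem_Iic, Fin.le_def]
    rw [he, Fin.card_Iic]
  have hAi : ∀ i : Fin (m + 1), (i : ℕ) ≤ k → A i = ((x i : ℝ) : ℂ) := by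
    intro i h; rw [hAdef]; exact if_neg (by omega)
  have hBη : ∀ i : Fin (m + 1), (i : ℕ) ≤ k → B i = ((ηv : ℝ) : ℂ) := by
    intro i h; rw [hBdef]; exact if_pos h
  have hBA : ∀ i : Fin (m + 1), ¬(i : ℕ) ≤ k → B i = A i := by
    intro i h; rw [hBdef]; exact if_neg h
  have hAne : ∀ i, A i ≠ 0 := by
    intro i; rw [hAdef]; dsimp only
    by_cases h : (i : ℕ) = k + 1
    · rw [if_pos h]; exact one_ne_zero
    · rw [if_neg h]; exact Complex.ofReal_ne_zero.2 (hx i).ne'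
  have hBne : ∀ i, B i ≠ 0 := by
    intro i
    by_cases h : (i : ℕ) ≤ k
    · rw [hBη i h]; exact Complex.ofReal_ne_zero.2 hη.ne'
    · rw [hBA i h]; exact hAne i
  have hAz : A ≠ 0 := fun h => hAne i0 (by rw [h]; rfl)
  have hBz : B ≠ 0 := fun h => hBne i0 (by rw [h]; rfl)
  -- products
  have hprodA : ∏ i ∈ Finset.univ.filter (fun i : Fin (m + 1) => (i : ℕ) ≤ k),
      ‖A i‖ = ∏ i ∈ Finset.univ.filter (fun i : Fin (m + 1) => (i : ℕ) ≤ k), x i := by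
    refine Finset.prod_congr rfl fun i hi => ?_
    rw [hAi i (Finset.mem_filter.1 hi).2, Complex.norm_real, Real.norm_eq_abs, abs_of_pos (hx i)]
  have hpow : ηv ^ ((k : ℕ) + 1) = ∏ i ∈ Finset.univ.filter
      (fun i : Fin (m + 1) => (i : ℕ) ≤ k), x i := by
    rw [hηdef, ← Real.rpow_natCast _ (k + 1), ← Real.rpow_mul hxprod.le]
    have h1 : 1 / ((k : ℝ) + 1) * (((k : ℕ) + 1 : ℕ) : ℝ) = 1 := by
      push_cast; field_simp
    rw [h1, Real.rpow_one]
  have hprodB : ∏ i ∈ Finset.univ.filter (fun i : Fin (m + 1) => (i : ℕ) ≤ k),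
      ‖B i‖ = ∏ i ∈ Finset.univ.filter (fun i : Fin (m + 1) => (i : ℕ) ≤ k), x i := by
    rw [← hpow]
    rw [Finset.prod_congr rfl (fun i hi => by
      rw [hBη i (Finset.mem_filter.1 hi).2, Complex.norm_real, Real.norm_eq_abs, abs_of_pos hη])]
    rw [Finset.prod_const, hcard]
  have hprod2 : ∏ i ∈ Finset.univ.filter (fun i : Fin (m + 1) => k + 1 ≤ (i : ℕ)),
      ‖B i‖ = ∏ i ∈ Finset.univ.filter (fun i : Fin (m + 1) => k + 1 ≤ (i : ℕ)),
      ‖A i‖ := by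
    refine Finset.prod_congr rfl fun i hi => ?_
    rw [hBA i (by have := (Finset.mem_filter.1 hi).2; omega)]
  -- psi decomposition
  have hlog : ∀ (z : Fin (m + 1) → ℂ), z ≠ 0 → ∀ P e : ℝ, 0 < P →
      Real.log (P ^ e / nsq z ^ ((m : ℝ) + 1)) =
        e * Real.log P - ((m : ℝ) + 1) * Real.log (nsq z) := by
    intro z hz P e hP
    rw [Real.log_div (Real.rpow_pos_of_pos hP e).ne'
      (Real.rpow_pos_of_pos (nsq_pos hz) _).ne', Real.log_rpow hP, Real.log_rpow (nsq_pos hz)]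
  set Cv : ℝ := ((m : ℝ) + 1) * (Real.log (nsq B) - Real.log (nsq A)) with hCv
  have hP2pos : 0 < ∏ i ∈ Finset.univ.filter (fun i : Fin (m + 1) => k + 1 ≤ (i : ℕ)),
      ‖A i‖ := Finset.prod_pos fun i _ => norm_pos_iff.2 (hAne i)
  have hpsi1 : psi1 m k A = psi1 m k B + Cv := by
    rw [psi1, psi1, hlog A hAz _ _ (by rw [hprodA]; exact hxprod),
      hlog B hBz _ _ (by rw [hprodB]; exact hxprod), hprodA, hprodB, hCv]
    ring
  have hpsi2 : psi2 m k A = psi2 m k B + Cv := by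
    rw [psi2, psi2, hlog A hAz _ _ hP2pos,
      hlog B hBz _ _ (by rw [hprod2]; exact hP2pos), hprod2, hCv]
    ring
  have hpsiAB : psi m k A = psi m k B + Cv := by
    rw [psi, psi, hpsi1, hpsi2, min_add_add_right]
  -- reduce to F B ≤ F A
  suffices hFAB : F B ≤ F A by
    have h1 : F B = ((m : ℝ) + 1) * Real.log (nsq B) + φ B := rfl
    have h2 : F A = ((m : ℝ) + 1) * Real.log (nsq A) + φ A := rfl
    rw [h1, h2] at hFAB
    rw [hpsiAB, hCv]
    linarith
  -- trivial case
  by_cases hcase : ∀ i : Fin (m + 1), (i : ℕ) ≤ k → x i = ηv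
  · have hBAeq : B = A := by
      funext i
      by_cases h : (i : ℕ) ≤ k
      · rw [hBη i h, hAi i h, hcase i h]
      · exact hBA i h
    rw [hBAeq]
  push_neg at hcase
  obtain ⟨iw, hiwk, hiw⟩ := hcase
  -- exponential curve setup
  set ε : Fin (m + 1) → ℝ := fun i => if (i : ℕ) ≤ k then Real.log (x i / ηv) else 0 with hεdef
  set γ : Fin (m + 1) → ℂ := fun i => ((ε i : ℝ) : ℂ) with hγdef
  have hγj1 : γ j1 = 0 := by
    rw [hγdef]; dsimp only
    rw [hεdef]; dsimp only
    rw [if_neg (by show ¬ (k + 1 ≤ k); omega)]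
    simp
  have hεiw : ε iw ≠ 0 := by
    rw [hεdef]; dsimp only
    rw [if_pos hiwk]
    intro h
    rcases Real.log_eq_zero.mp h with h' | h' | h'
    · exact absurd h' (div_pos (hx iw) hη).ne'
    · exact hiw (by field_simp at h'; linarith)
    · nlinarith [div_pos (hx iw) hη]
  have hQne : ∀ τ : ℝ, (fun i => B i * Complex.exp (γ i * τ)) ≠ (0 : Fin (m + 1) → ℂ) := by
    intro τ h
    exact mul_ne_zero (hBne i0) (Complex.exp_ne_zero _) (congrFun h i0)
  have hQF : ∀ τ : ℝ, ContDiffAt ℝ (⊤ : ℕ∞) F (fun i => B i * Complex.exp (γ i * τ)) :=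
    fun τ => hFC _ (hQne τ)
  have hFphase : ∀ (θ : Fin (m + 1) → ℝ) (z : Fin (m + 1) → ℂ),
      F (fun i => Complex.exp ((θ i : ℂ) * Complex.I) * z i) = F z := by
    intro θ z
    have h1 : nsq (fun i => Complex.exp ((θ i : ℂ) * Complex.I) * z i) = nsq z := by
      unfold nsq
      refine Finset.sum_congr rfl fun i _ => ?_
      rw [norm_mul, Complex.norm_exp_ofReal_mul_I, one_mul]
    rw [hFdef]; dsimp only
    rw [h1, phi_phases hG.2.2 θ z]
  have hFswap : ∀ i j : Fin (m + 1), (i : ℕ) ≤ k → (j : ℕ) ≤ k →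
      ∀ z, F (z ∘ Equiv.swap i j) = F z := by
    intro i j hi hj z
    rw [hFdef]; dsimp only
    rw [nsq_comp_equiv, hG.1 i j hi hj]
  set d : ℝ → ℝ := fun σ => fderiv ℝ F (fun i => B i * Complex.exp (γ i * σ))
      (fun i => γ i * (B i * Complex.exp (γ i * σ))) with hddef
  have hhd : ∀ σ : ℝ, HasDerivAt (fun σ : ℝ => F (fun i => B i * Complex.exp (γ i * σ)))
      (d σ) σ :=
    fun σ => hasDerivAt_F_expCurve B γ σ ((hQF σ).differentiableAt (by simp))
  have hdd : ∀ σ : ℝ, ∃ e : ℝ, HasDerivAt d e σ ∧ 0 < e := by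
    intro σ
    refine ⟨_, hasDerivAt_dF_expCurve B γ σ (hQF σ), ?_⟩
    set p : Fin (m + 1) → ℂ := fun i => B i * Complex.exp (γ i * σ) with hpdef
    set v : Fin (m + 1) → ℂ := fun i => γ i * p i with hvdef
    have hpj1 : p j1 ≠ 0 := mul_ne_zero (hBne j1) (Complex.exp_ne_zero _)
    have hpiw : p iw ≠ 0 := mul_ne_zero (hBne iw) (Complex.exp_ne_zero _)
    have hvj1 : v j1 = 0 := by rw [hvdef]; dsimp only; rw [hγj1, zero_mul]
    have hpne : p ≠ 0 := hQne σ
    have hvnot : ∀ c : ℂ, v ≠ c • p := by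
      intro c hcv
      have h1 := congrFun hcv j1
      rw [hvj1] at h1
      have hc0 : c = 0 := by
        have : c * p j1 = 0 := h1.symm
        rcases mul_eq_zero.1 this with h | h
        · exact h
        · exact absurd h hpj1
      have h2 := congrFun hcv iw
      rw [hc0, zero_smul] at h2
      have h3 : γ iw * p iw = 0 := by
        have := h2
        rw [hvdef] at this
        simpa using this
      rcases mul_eq_zero.1 h3 with h | h
      · exact hεiw (by simpa [hγdef] using h)
      · exact hpiw h
    have hΛ := hadm p hpne v hvnot
    have hΛ' : 0 < lap (fun t : ℂ => F (p + t • v)) 0 := hΛ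
    have hline : ∀ s : ℂ, ContDiffAt ℝ (⊤ : ℕ∞) F (p + s • v) := by
      intro s
      apply hFC
      intro h
      have h1 := congrFun h j1
      rw [Pi.add_apply, Pi.smul_apply, hvj1, smul_zero, add_zero] at h1
      exact hpj1 h1
    rw [lap_line_eq hline] at hΛ'
    have hph := phase_identity (F := F) p (fun i => γ i * Complex.I)
      (fun τ => by
        apply hFC
        intro h
        have h1 := congrFun h j1
        have : p j1 * Complex.exp (γ j1 * Complex.I * τ) = 0 := h1
        rw [hγj1] at this
        simp at this
        exact hpj1 this)
      (fun τ => by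
        have he : (fun i => p i * Complex.exp (γ i * Complex.I * τ)) =
            (fun i => Complex.exp (((ε i * τ : ℝ) : ℂ) * Complex.I) * p i) := by
          funext i
          rw [hγdef]; dsimp only
          rw [mul_comm]
          congr 2
          push_cast
          ring
        rw [he, hFphase])
    have hIv : (fun i => (γ i * Complex.I) * p i) = Complex.I • v := by
      funext i
      rw [Pi.smul_apply, hvdef]; dsimp only
      rw [smul_eq_mul]; ring
    have hneg : (fun i => (γ i * Complex.I) * ((γ i * Complex.I) * p i)) =
        -(fun i => γ i * (γ i * p i)) := by
      funext i
      rw [Pi.neg_apply]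
      rw [show (γ i * Complex.I) * ((γ i * Complex.I) * p i) =
        (Complex.I * Complex.I) * (γ i * (γ i * p i)) from by ring, Complex.I_mul_I]
      ring
    rw [hIv, hneg, map_neg] at hph
    show 0 < fderiv ℝ (fderiv ℝ F) p v v + fderiv ℝ F p (fun i => γ i * (γ i * p i))
    linarith
  have hsum : ∑ i ∈ Finset.univ.filter (fun i : Fin (m + 1) => (i : ℕ) ≤ k), ε i = 0 := by
    have h1 : ∑ i ∈ Finset.univ.filter (fun i : Fin (m + 1) => (i : ℕ) ≤ k), ε i =
        ∑ i ∈ Finset.univ.filter (fun i : Fin (m + 1) => (i : ℕ) ≤ k),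
          (Real.log (x i) - Real.log ηv) := by
      refine Finset.sum_congr rfl fun i hi => ?_
      rw [hεdef]; dsimp only
      rw [if_pos (Finset.mem_filter.1 hi).2, Real.log_div (hx i).ne' hη.ne']
    rw [h1, Finset.sum_sub_distrib, Finset.sum_const, hcard,
      ← Real.log_prod (fun i _ => (hx i).ne'), nsmul_eq_mul]
    have h2 : Real.log ηv = (1 / ((k : ℝ) + 1)) *
        Real.log (∏ i ∈ Finset.univ.filter (fun i : Fin (m + 1) => (i : ℕ) ≤ k), x i) := by
      rw [hηdef, Real.log_rpow hxprod]
    rw [h2]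
    have hk0 : ((k : ℝ) + 1) ≠ 0 := by positivity
    push_cast
    field_simp
    ring
  have hd0 : d 0 = 0 := by
    rw [hddef]; dsimp only
    have e1 : (fun i => B i * Complex.exp (γ i * ((0 : ℝ) : ℂ))) = B := expCurve_zero B γ
    have e2 : (fun i => γ i * (B i * Complex.exp (γ i * ((0 : ℝ) : ℂ)))) =
        fun i => γ i * B i := by funext i; simp
    rw [e1, e2]
    have hsingle : (fun i => γ i * B i) =
        ∑ i ∈ Finset.univ, ε i • (Pi.single i (B i) : Fin (m + 1) → ℂ) := by
      funext j
      rw [Finset.sum_apply]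
      have hterm0 : ∀ i ∈ Finset.univ,
          (ε i • (Pi.single i (B i) : Fin (m + 1) → ℂ)) j =
          if j = i then ε i • B i else 0 := by
        intro i _
        rw [Pi.smul_apply, Pi.single_apply]
        by_cases h : j = i
        · rw [if_pos h, if_pos h]
        · rw [if_neg h, if_neg h, smul_zero]
      rw [Finset.sum_congr rfl hterm0, Finset.sum_ite_eq _ j (fun i => ε i • B i),
        if_pos (Finset.mem_univ j)]
      rw [hγdef]; dsimp only
      rw [Complex.real_smul]
    rw [hsingle, map_sum]
    have hterm : ∀ i ∈ Finset.univ,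
        fderiv ℝ F B (ε i • (Pi.single i (B i) : Fin (m + 1) → ℂ)) =
        ε i * fderiv ℝ F B (Pi.single i (B i) : Fin (m + 1) → ℂ) := by
      intro i _
      rw [_root_.map_smul, smul_eq_mul]
    rw [Finset.sum_congr rfl hterm]
    have hdiffB : DifferentiableAt ℝ F B := (hFC B hBz).differentiableAt (by simp)
    have hD : ∀ i : Fin (m + 1), (i : ℕ) ≤ k →
        fderiv ℝ F B ((Pi.single i (B i) : Fin (m + 1) → ℂ)) = fderiv ℝ F B ((Pi.single i0 (B i0) : Fin (m + 1) → ℂ)) := by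
      intro i hik
      by_cases hii : i = i0
      · rw [hii]
      have hi0k2 : ((i0 : Fin (m + 1)) : ℕ) ≤ k := by rw [hi0]; simp
      have h1 := hasDerivAt_along hdiffB ((Pi.single i (B i) : Fin (m + 1) → ℂ))
      have h2 := hasDerivAt_along hdiffB ((Pi.single i0 (B i0) : Fin (m + 1) → ℂ))
      have hfeq : (fun s : ℝ => F (B + s • (Pi.single i (B i) : Fin (m + 1) → ℂ))) =
          (fun s : ℝ => F (B + s • (Pi.single i0 (B i0) : Fin (m + 1) → ℂ))) := by
        funext s
        have hswap : (B + s • (Pi.single i0 (B i0) : Fin (m + 1) → ℂ)) ∘ (Equiv.swap i i0) =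
            B + s • (Pi.single i (B i) : Fin (m + 1) → ℂ) := by
          funext l
          simp only [Function.comp_apply, Pi.add_apply, Pi.smul_apply, Pi.single_apply]
          rcases eq_or_ne l i with hl | hl
          · subst hl
            rw [Equiv.swap_apply_left]
            simp [hBη _ hik, hBη _ hi0k2]
          · rcases eq_or_ne l i0 with hl0 | hl0
            · subst hl0
              rw [Equiv.swap_apply_right]
              simp [if_neg hii, if_neg (Ne.symm hii), hBη _ hik, hBη _ hi0k2]
            · rw [Equiv.swap_apply_of_ne_of_ne hl hl0]
              simp [if_neg hl, if_neg hl0]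
        rw [← hswap, hFswap i i0 hik hi0k2]
      rw [hfeq] at h1
      exact h1.unique h2
    have hsplit : ∑ i : Fin (m + 1), ε i * fderiv ℝ F B ((Pi.single i (B i) : Fin (m + 1) → ℂ)) =
        ∑ i ∈ Finset.univ.filter (fun i : Fin (m + 1) => (i : ℕ) ≤ k),
          ε i * fderiv ℝ F B ((Pi.single i (B i) : Fin (m + 1) → ℂ)) := by
      symm
      apply Finset.sum_filter_of_ne
      intro i _ hne
      by_contra hik
      apply hne
      rw [hεdef]; dsimp only
      rw [if_neg hik, zero_mul]
    rw [hsplit]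
    rw [Finset.sum_congr rfl (fun i hi => by
      rw [hD i (Finset.mem_filter.1 hi).2]), ← Finset.sum_mul, hsum, zero_mul]
  have hdpos : ∀ σ : ℝ, 0 < σ → 0 < d σ := by
    have hmono : StrictMono d := strictMono_of_deriv_pos (fun σ => by
      obtain ⟨e, he, hpos⟩ := hdd σ
      rw [he.deriv]; exact hpos)
    intro σ hσ
    have := hmono hσ
    rwa [hd0] at this
  have hcurve1 : (fun i => B i * Complex.exp (γ i * ((1 : ℝ) : ℂ))) = A := by
    funext i
    by_cases h : (i : ℕ) ≤ k
    · rw [hBη i h, hAi i h]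
      have hγi : γ i = ((Real.log (x i / ηv) : ℝ) : ℂ) := by
        rw [hγdef]; dsimp only; rw [hεdef]; dsimp only; rw [if_pos h]
      rw [hγi, Complex.ofReal_one, mul_one, ← Complex.ofReal_exp,
        Real.exp_log (div_pos (hx i) hη), ← Complex.ofReal_mul]
      congr 1
      field_simp
    · rw [hBA i h]
      have hγi : γ i = 0 := by
        rw [hγdef]; dsimp only; rw [hεdef]; dsimp only; rw [if_neg h]; simp
      rw [hγi]; simp
  have hcont : ContinuousOn (fun σ : ℝ => F (fun i => B i * Complex.exp (γ i * σ)))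
      (Set.Icc 0 1) := fun σ _ => ((hhd σ).continuousAt).continuousWithinAt
  have hmono2 := monotoneOn_of_deriv_nonneg (convex_Icc (0:ℝ) 1) hcont
    (fun σ _ => ((hhd σ).differentiableAt).differentiableWithinAt)
    (fun σ hσ => by
      rw [(hhd σ).deriv]
      rw [interior_Icc] at hσ
      exact (hdpos σ hσ.1).le)
  have h01 := hmono2 (Set.left_mem_Icc.2 zero_le_one) (Set.right_mem_Icc.2 zero_le_one)
    zero_le_one
  dsimp only at h01
  rwa [expCurve_zero B γ, hcurve1] at h01
end
end

section
/- Let α ≥ 0 be a real number. The function (u_1,…,u_m) ↦ (u_1⋯u_k)^{−α(m+1)/(k+1)} · (1+u_1+…+u_m)^{−(1−α)(m+1)} is Lebesgue-integrable on (0,∞)^m if and only if α < (k+1)/(m+1). -/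
open MeasureTheory Finset Set Real

/-!
Put `a = α(m+1)/(k+1)` and `b = (1-α)(m+1)`; then `a k + b = m + 1 - a`, and the condition on `α`
says `a < 1`.

If `a < 1`, pick `ε > 0` and exponents `β i = 1 + ε - a i ≥ 0` with `∑ β i ≤ b`, where `a i = a` on
the first `k` coordinates and `0` elsewhere. Since `(1 + ∑ u i) ^ (-b) ≤ ∏ (1 + u i) ^ (-β i)`, the
integrand is dominated by the product of the one-variable functions `x ^ (-a i) * (1 + x) ^ (-β i)`,
each integrable on `(0, ∞)` because `a i < 1 < a i + β i`.

If `a ≥ 1`, then on the unit cube the integrand is at least a constant times `u 0 ^ (-a)`, and the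
integral of that over the cube is the divergent integral of `x ^ (-a)` over `(0, 1)`.
-/

lemma integrableOn_Ioi_rpow_neg_mul_one_add_rpow_neg {a β : ℝ} (ha : a < 1) (haβ : 1 < a + β) :
    IntegrableOn (fun x : ℝ => x ^ (-a) * (1 + x) ^ (-β)) (Ioi 0) := by
  have hmeas : AEStronglyMeasurable (fun x : ℝ => x ^ (-a) * (1 + x) ^ (-β)) :=
    (by fun_prop : Measurable _).aestronglyMeasurable
  have near_zero : IntegrableOn (fun x : ℝ => x ^ (-a) * (1 + x) ^ (-β)) (Ioc 0 1) := by
    have hdom : IntegrableOn (fun x : ℝ => x ^ (-a)) (Ioc 0 1) := by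
      rw [← intervalIntegrable_iff_integrableOn_Ioc_of_le zero_le_one]
      exact intervalIntegral.intervalIntegrable_rpow' (by linarith)
    refine hdom.mono' hmeas.restrict ?_
    filter_upwards [ae_restrict_mem measurableSet_Ioc] with x hx
    have hx0 : 0 < x := hx.1
    rw [norm_of_nonneg (by positivity)]
    exact mul_le_of_le_one_right (by positivity)
      (rpow_le_one_of_one_le_of_nonpos (by linarith) (by linarith))
  have near_infty : IntegrableOn (fun x : ℝ => x ^ (-a) * (1 + x) ^ (-β)) (Ioi 1) := by
    have hdom : IntegrableOn (fun x : ℝ => x ^ (-(a + β))) (Ioi 1) :=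
      integrableOn_Ioi_rpow_of_lt (by linarith) zero_lt_one
    refine hdom.mono' hmeas.restrict ?_
    filter_upwards [ae_restrict_mem measurableSet_Ioi] with x hx
    have hx0 : 0 < x := zero_lt_one.trans hx
    rw [norm_of_nonneg (by positivity), neg_add, rpow_add hx0]
    exact mul_le_mul_of_nonneg_left
      (rpow_le_rpow_of_nonpos hx0 (by linarith) (by linarith)) (by positivity)
  simpa only [Ioc_union_Ioi_eq_Ioi zero_le_one] using near_zero.union near_infty

lemma one_add_sum_rpow_neg_le_prod {ι : Type*} (s : Finset ι) {u β : ι → ℝ} {b : ℝ}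
    (hu : ∀ i ∈ s, 0 ≤ u i) (hβ : ∀ i ∈ s, 0 ≤ β i) (hβb : ∑ i ∈ s, β i ≤ b) :
    (1 + ∑ i ∈ s, u i) ^ (-b) ≤ ∏ i ∈ s, (1 + u i) ^ (-β i) := by
  have hsum : 0 ≤ ∑ i ∈ s, u i := sum_nonneg hu
  calc (1 + ∑ i ∈ s, u i) ^ (-b) ≤ (1 + ∑ i ∈ s, u i) ^ (∑ i ∈ s, -β i) := by
        rw [sum_neg_distrib]
        exact rpow_le_rpow_of_exponent_le (by linarith) (by linarith)
    _ = ∏ i ∈ s, (1 + ∑ j ∈ s, u j) ^ (-β i) := rpow_sum_of_pos (by linarith) _ _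
    _ ≤ ∏ i ∈ s, (1 + u i) ^ (-β i) := by
        refine prod_le_prod (fun i hi => by have := hu i hi; positivity) fun i hi => ?_
        have := hu i hi
        exact rpow_le_rpow_of_nonpos (by linarith) (by linarith [single_le_sum hu hi])
          (by linarith [hβ i hi])

lemma setOf_forall_pos_eq_pi {ι : Type*} :
    {u : ι → ℝ | ∀ i, 0 < u i} = Set.univ.pi fun _ => Ioi 0 := by
  ext u
  simp

section Orthant

variable {ι : Type*} [Fintype ι]

noncomputable def orthantWeight (s : Finset ι) (a b : ℝ) (u : ι → ℝ) : ℝ :=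
  (∏ i ∈ s, u i) ^ (-a) * (1 + ∑ i, u i) ^ (-b)

lemma measurable_orthantWeight (s : Finset ι) (a b : ℝ) : Measurable (orthantWeight s a b) := by
  unfold orthantWeight
  fun_prop

lemma orthantWeight_nonneg (s : Finset ι) (a b : ℝ) {u : ι → ℝ} (hu : ∀ i, 0 ≤ u i) :
    0 ≤ orthantWeight s a b u :=
  mul_nonneg (rpow_nonneg (prod_nonneg fun i _ => hu i) _)
    (rpow_nonneg (by linarith [sum_nonneg fun i (_ : i ∈ Finset.univ) => hu i]) _)

open Classical in
lemma orthantWeight_le_prod (s : Finset ι) {a b : ℝ} {β : ι → ℝ} (hβ : ∀ i, 0 ≤ β i)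
    (hβb : ∑ i, β i ≤ b) {u : ι → ℝ} (hu : ∀ i, 0 < u i) :
    orthantWeight s a b u ≤ ∏ i, u i ^ (-if i ∈ s then a else 0) * (1 + u i) ^ (-β i) := by
  have hprod : (∏ i ∈ s, u i) ^ (-a) = ∏ i, u i ^ (-if i ∈ s then a else 0) := by
    calc (∏ i ∈ s, u i) ^ (-a) = ∏ i, if i ∈ s then u i ^ (-a) else 1 := by
          rw [prod_ite_mem, Finset.univ_inter, finsetProd_rpow _ _ fun i _ => (hu i).le]
      _ = ∏ i, u i ^ (-if i ∈ s then a else 0) :=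
          prod_congr rfl fun i _ => by split_ifs <;> simp
  rw [orthantWeight, prod_mul_distrib, hprod]
  exact mul_le_mul_of_nonneg_left
    (one_add_sum_rpow_neg_le_prod univ (fun i _ => (hu i).le) (fun i _ => hβ i) hβb)
    (prod_nonneg fun i _ => by have := hu i; positivity)

theorem integrableOn_orthantWeight_of_lt_one (s : Finset ι) {a b : ℝ} (ha : a < 1)
    (hab : Fintype.card ι < a * #s + b) :
    IntegrableOn (orthantWeight s a b) {u | ∀ i, 0 < u i} := by
  classical
  rw [setOf_forall_pos_eq_pi]
  set n : ℝ := (Fintype.card ι : ℝ)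
  set ε := (a * #s + b - n) / (n + 1)
  have hε : 0 < ε := div_pos (by linarith) (by positivity)
  have hεb : (n + 1) * ε = a * #s + b - n := mul_div_cancel₀ _ (by positivity)
  set c : ι → ℝ := fun i => if i ∈ s then a else 0
  have hc : ∀ i, c i < 1 := fun i => by simp only [c]; split_ifs <;> linarith
  have hβb : ∑ i, (1 + ε - c i) ≤ b := by
    simp only [c, sum_sub_distrib, sum_ite_mem, Finset.univ_inter, sum_const, card_univ,
      nsmul_eq_mul]
    linarith
  have hdom : IntegrableOn (fun u : ι → ℝ => ∏ i, u i ^ (-c i) * (1 + u i) ^ (-(1 + ε - c i)))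
      (Set.univ.pi fun _ => Ioi 0) := by
    rw [IntegrableOn, volume_pi, Measure.restrict_pi_pi]
    exact Integrable.fintype_prod fun i =>
      integrableOn_Ioi_rpow_neg_mul_one_add_rpow_neg (hc i) (by linarith)
  refine hdom.mono' (measurable_orthantWeight s a b).aestronglyMeasurable ?_
  filter_upwards [ae_restrict_mem (MeasurableSet.univ_pi fun _ => measurableSet_Ioi)] with u hu
  have hu : ∀ i, 0 < u i := Set.mem_univ_pi.1 hu
  rw [norm_of_nonneg (orthantWeight_nonneg s a b fun i => (hu i).le)]
  exact orthantWeight_le_prod s (fun i => by linarith [hc i]) hβb hu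

lemma le_orthantWeight_of_mem_Ioo {s : Finset ι} {i₀ : ι} (hi₀ : i₀ ∈ s) {a : ℝ} (ha : 0 ≤ a)
    (b : ℝ) {u : ι → ℝ} (hu : ∀ i, u i ∈ Set.Ioo 0 1) :
    ((Fintype.card ι : ℝ) + 1) ^ (-|b|) * u i₀ ^ (-a) ≤ orthantWeight s a b u := by
  have hprod : ∏ i ∈ s, u i ≤ u i₀ := by
    classical
    rw [← mul_prod_erase s u hi₀]
    exact mul_le_of_le_one_right (hu i₀).1.le
      (prod_le_one (fun i _ => (hu i).1.le) fun i _ => (hu i).2.le)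
  have hsum_nonneg : 0 ≤ ∑ i, u i := sum_nonneg fun i _ => (hu i).1.le
  have hsum_le : ∑ i, u i ≤ Fintype.card ι := by
    simpa using sum_le_sum fun i (_ : i ∈ Finset.univ) => (hu i).2.le
  have hweight : ((Fintype.card ι : ℝ) + 1) ^ (-|b|) ≤ (1 + ∑ i, u i) ^ (-b) :=
    calc ((Fintype.card ι : ℝ) + 1) ^ (-|b|) ≤ (1 + ∑ i, u i) ^ (-|b|) :=
          rpow_le_rpow_of_nonpos (by linarith) (by linarith) (by simp)
      _ ≤ (1 + ∑ i, u i) ^ (-b) :=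
          rpow_le_rpow_of_exponent_le (by linarith) (by linarith [le_abs_self b])
  rw [orthantWeight, mul_comm]
  exact mul_le_mul (rpow_le_rpow_of_nonpos (prod_pos fun i _ => (hu i).1) hprod (by linarith))
    hweight (by positivity) (rpow_nonneg (prod_nonneg fun i _ => (hu i).1.le) _)

theorem lt_one_of_integrableOn_orthantWeight {s : Finset ι} {i₀ : ι} (hi₀ : i₀ ∈ s) {a b : ℝ}
    (h : IntegrableOn (orthantWeight s a b) {u | ∀ i, 0 < u i}) : a < 1 := by
  rcases lt_or_ge a 0 with ha | ha
  · linarith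
  set C : Set (ι → ℝ) := Set.univ.pi fun _ => Ioo 0 1
  have hC : MeasurableSet C := MeasurableSet.univ_pi fun _ => measurableSet_Ioo
  have hCS : C ⊆ {u | ∀ i, 0 < u i} := fun u hu i => (Set.mem_univ_pi.1 hu i).1
  set c : ℝ := ((Fintype.card ι : ℝ) + 1) ^ (-|b|)
  have hc : 0 < c := by positivity
  have hcube : Integrable (fun u : ι → ℝ => u i₀ ^ (-a)) (volume.restrict C) := by
    refine (integrable_const_mul_iff (IsUnit.mk0 c hc.ne') _).1 ?_
    refine Integrable.mono (h.mono_set hCS)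
      (by fun_prop : Measurable fun u : ι → ℝ => c * u i₀ ^ (-a)).aestronglyMeasurable ?_
    filter_upwards [ae_restrict_mem hC] with u hu
    have hu : ∀ i, u i ∈ Set.Ioo 0 1 := Set.mem_univ_pi.1 hu
    rw [norm_of_nonneg (by have := (hu i₀).1; positivity),
      norm_of_nonneg (orthantWeight_nonneg s a b fun i => (hu i).1.le)]
    exact le_orthantWeight_of_mem_Ioo hi₀ ha b hu
  have : IsProbabilityMeasure (volume.restrict (Ioo (0 : ℝ) 1)) := ⟨by simp⟩
  rw [volume_pi, Measure.restrict_pi_pi] at hcube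
  have hIoo : IntegrableOn (fun x : ℝ => x ^ (-a)) (Ioo 0 1) :=
    ((measurePreserving_eval (fun _ : ι => volume.restrict (Ioo (0 : ℝ) 1)) i₀).integrable_comp
      (by fun_prop : Measurable fun x : ℝ => x ^ (-a)).aestronglyMeasurable).1 hcube
  linarith [(intervalIntegral.integrableOn_Ioo_rpow_iff one_pos).1 hIoo]

end Orthant

theorem stmt18_general (m k : ℕ) (hk : 1 ≤ k) (hkm : k ≤ m - 1) (α : ℝ) :
    MeasureTheory.IntegrableOn
      (fun u : Fin m → ℝ =>
        (∏ i ∈ Finset.univ.filter (fun i : Fin m => (i : ℕ) < k), u i) ^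
            (-(α * ((m : ℝ) + 1) / ((k : ℝ) + 1))) *
          (1 + ∑ i, u i) ^ (-((1 - α) * ((m : ℝ) + 1))))
      {u : Fin m → ℝ | ∀ i, 0 < u i} ↔
    α < ((k : ℝ) + 1) / ((m : ℝ) + 1) := by
  set s := univ.filter fun i : Fin m => (i : ℕ) < k
  set a := α * ((m : ℝ) + 1) / ((k : ℝ) + 1)
  have hak : a * ((k : ℝ) + 1) = α * ((m : ℝ) + 1) := div_mul_cancel₀ _ (by positivity)
  have hcard : #s = k := by
    rw [Fin.card_filter_val_lt]
    omega
  rw [lt_div_iff₀ (by positivity), ← div_lt_one (by positivity)]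
  change IntegrableOn (orthantWeight s a ((1 - α) * ((m : ℝ) + 1))) _ ↔ a < 1
  refine ⟨lt_one_of_integrableOn_orthantWeight (i₀ := ⟨0, by omega⟩) (by simp [s]; omega),
    fun ha => integrableOn_orthantWeight_of_lt_one s ha ?_⟩
  rw [Fintype.card_fin, hcard]
  linear_combination ha - hak

theorem stmt18 (m k : ℕ) (hm : 2 ≤ m) (hk : 1 ≤ k) (hkm : k ≤ m - 1)
    (α : ℝ) (hα : 0 ≤ α) :
    MeasureTheory.IntegrableOn
      (fun u : Fin m → ℝ =>
        (∏ i ∈ Finset.univ.filter (fun i : Fin m => (i : ℕ) < k), u i) ^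
            (-(α * ((m : ℝ) + 1) / ((k : ℝ) + 1))) *
          (1 + ∑ i, u i) ^ (-((1 - α) * ((m : ℝ) + 1))))
      {u : Fin m → ℝ | ∀ i, 0 < u i} ↔
    α < ((k : ℝ) + 1) / ((m : ℝ) + 1) :=
  stmt18_general m k hk hkm α
end
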